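/- arXiv:2103.00123 — 8 statements merged into one kernel-verified Lean document; each statement's English description precedes it below -/
import Mathlib

section
/- Let T ≥ 1 and suppose the constant learning rate is α_t = α = D/(σ_T √T) for all t. Assume ‖∇L_T^i(θ)‖ ≤ σ_T for every i ∈ X^t and every θ ∈ ℝ^d. Then the adaptive-data-selection gradient descent iterates satisfy min_{0 ≤ t ≤ T−1} (L(θ_t) − L(θ*)) ≤ D σ_T/√T + (D/T) · Σ_{t=0}^{T−1} Err(w^t, X^t, L, L_T, θ_t). -/
open Finset

lemma convex_grad_ineq {d : ℕ} {f : EuclideanSpace ℝ (Fin d) → ℝ}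
    (hc : ConvexOn ℝ Set.univ f) {g x : EuclideanSpace ℝ (Fin d)}
    (hf : HasGradientAt f g x) (y : EuclideanSpace ℝ (Fin d)) :
    f x + inner ℝ g (y - x) ≤ f y := by
  set v := y - x with hv
  have hu : HasDerivAt (fun s : ℝ => x + s • v) v 0 := by
    simpa using ((hasDerivAt_id (0 : ℝ)).smul_const v).const_add x
  have hx0 : x + (0 : ℝ) • v = x := by simp
  have hφ : HasDerivAt (fun s : ℝ => f (x + s • v)) (inner ℝ g v : ℝ) 0 := by
    have h1 : HasFDerivAt f (InnerProductSpace.toDual ℝ _ g) (x + (0:ℝ) • v) := by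
      rw [hx0]; exact hf.hasFDerivAt
    have := h1.comp_hasDerivAt 0 hu
    simp at this; exact this
  have key : (inner ℝ g v : ℝ) ≤ f y - f x := by
    have htend : Filter.Tendsto (slope (fun s : ℝ => f (x + s • v)) 0)
        (nhdsWithin 0 (Set.Ioi 0)) (nhds (inner ℝ g v : ℝ)) :=
      (hasDerivAt_iff_tendsto_slope.mp hφ).mono_left
        (nhdsWithin_mono 0 (fun s hs => ne_of_gt hs))
    refine le_of_tendsto htend ?_
    filter_upwards [Ioc_mem_nhdsGT_of_mem (by simp : (0:ℝ) ∈ Set.Ico (0:ℝ) 1)]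
    intro s hs
    obtain ⟨hs0, hs1⟩ := hs
    have hconv := hc.2 (Set.mem_univ x) (Set.mem_univ y)
      (by linarith : (0:ℝ) ≤ 1 - s) (le_of_lt hs0) (by ring)
    have heq : (1 - s) • x + s • y = x + s • v := by rw [hv]; module
    rw [heq] at hconv
    have hsl : slope (fun s : ℝ => f (x + s • v)) 0 s = (f (x + s • v) - f x) / s := by
      rw [slope_def_field]; simp
    rw [hsl, div_le_iff₀ hs0]
    simp only [smul_eq_mul] at hconv
    nlinarith [hconv]
  linarith

/-- Theorem 1 (1) of Grad-Match: convergence of adaptive data subset selection with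
full gradient descent, Lipschitz-continuous case. -/
theorem gradmatch_convergence_lipschitz
    {d : ℕ} {ι : Type*}
    (L : EuclideanSpace ℝ (Fin d) → ℝ)
    (gL : EuclideanSpace ℝ (Fin d) → EuclideanSpace ℝ (Fin d))
    (hL : ∀ θ, HasGradientAt L (gL θ) θ)
    (hLconv : ConvexOn ℝ Set.univ L)
    (θstar : EuclideanSpace ℝ (Fin d))
    (hmin : ∀ θ, L θstar ≤ L θ)
    (LT : ι → EuclideanSpace ℝ (Fin d) → ℝ)
    (gLT : ι → EuclideanSpace ℝ (Fin d) → EuclideanSpace ℝ (Fin d))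
    (hLT : ∀ i θ, HasGradientAt (LT i) (gLT i θ) θ)
    (X : ℕ → Finset ι) (w : ℕ → ι → ℝ)
    (hw0 : ∀ t, ∀ i ∈ X t, 0 ≤ w t i)
    (hw1 : ∀ t, ∑ i ∈ X t, w t i = 1)
    (θ : ℕ → EuclideanSpace ℝ (Fin d))
    (D σT : ℝ) (T : ℕ) (hT : 1 ≤ T)
    (hD : ∀ t, ‖θ t - θstar‖ ≤ D)
    (hσ : ∀ t, ∀ i ∈ X t, ∀ x, ‖gLT i x‖ ≤ σT)
    (α : ℝ) (hα : α = D / (σT * Real.sqrt T))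
    (hupd : ∀ t, θ (t + 1) = θ t - α • ∑ i ∈ X t, w t i • gLT i (θ t)) :
    (Finset.range T).inf' (Finset.nonempty_range_iff.mpr (by omega))
        (fun t => L (θ t) - L θstar)
      ≤ D * σT / Real.sqrt T
        + (D / T) * ∑ t ∈ Finset.range T,
            ‖(∑ i ∈ X t, w t i • gLT i (θ t)) - gL (θ t)‖ := by
  have hXne : ∀ t, (X t).Nonempty := by
    intro t
    rw [Finset.nonempty_iff_ne_empty]
    intro h
    have h1 := hw1 t
    rw [h] at h1
    simp at h1
  have hD0 : (0:ℝ) ≤ D := le_trans (norm_nonneg _) (hD 0)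
  have hσ0 : (0:ℝ) ≤ σT := by
    obtain ⟨i, hi⟩ := hXne 0
    exact le_trans (norm_nonneg _) (hσ 0 i hi (θ 0))
  have hTpos : (0:ℝ) < (T:ℝ) := by exact_mod_cast hT
  have hErrnn : ∀ t, (0:ℝ) ≤ ‖(∑ i ∈ X t, w t i • gLT i (θ t)) - gL (θ t)‖ :=
    fun t => norm_nonneg _
  -- convexity bound at each point
  have hconvb : ∀ t : ℕ, L (θ t) - L θstar ≤ inner ℝ (gL (θ t)) (θ t - θstar) := by
    intro t
    have h := convex_grad_ineq hLconv (hL (θ t)) θstar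
    have h2 : (inner ℝ (gL (θ t)) (θstar - θ t) : ℝ)
        = - inner ℝ (gL (θ t)) (θ t - θstar) := by
      rw [← inner_neg_right]; congr 1; abel
    rw [h2] at h; linarith
  -- case σT = 0
  rcases eq_or_lt_of_le hσ0 with hσz | hσpos
  · have hg0 : ∀ t, (∑ i ∈ X t, w t i • gLT i (θ t)) = 0 := by
      intro t
      refine Finset.sum_eq_zero fun i hi => ?_
      have h := hσ t i hi (θ t)
      rw [← hσz] at h
      rw [norm_le_zero_iff.mp h, smul_zero]
    have hθc : ∀ t, θ t = θ 0 := by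
      intro t
      induction t with
      | zero => rfl
      | succ n ih => rw [hupd n, hg0 n, smul_zero, sub_zero, ih]
    have hb : L (θ 0) - L θstar ≤ D * ‖gL (θ 0)‖ := by
      have h1 := hconvb 0
      have h2 : (inner ℝ (gL (θ 0)) (θ 0 - θstar) : ℝ) ≤ ‖gL (θ 0)‖ * ‖θ 0 - θstar‖ :=
        real_inner_le_norm _ _
      have h3 : ‖gL (θ 0)‖ * ‖θ 0 - θstar‖ ≤ ‖gL (θ 0)‖ * D :=
        mul_le_mul_of_nonneg_left (hD 0) (norm_nonneg _)
      nlinarith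
    have hsum : ∑ t ∈ Finset.range T,
        ‖(∑ i ∈ X t, w t i • gLT i (θ t)) - gL (θ t)‖ = T * ‖gL (θ 0)‖ := by
      rw [Finset.sum_congr rfl (fun t _ => by rw [hg0 t, hθc t, zero_sub, norm_neg])]
      rw [Finset.sum_const, Finset.card_range, nsmul_eq_mul]
    refine le_trans (Finset.inf'_le _ (Finset.mem_range.mpr (by omega : 0 < T))) ?_
    rw [hsum]
    calc L (θ 0) - L θstar
        ≤ D * ‖gL (θ 0)‖ := hb
      _ = D * σT / Real.sqrt T + (D / T) * (T * ‖gL (θ 0)‖) := by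
          rw [← hσz]; field_simp; ring
  -- σT > 0 now; case D = 0
  rcases eq_or_lt_of_le hD0 with hDz | hDpos
  · have hθ0 : θ 0 = θstar := by
      have := hD 0; rw [← hDz] at this
      have := norm_le_zero_iff.mp this
      rwa [sub_eq_zero] at this
    have h0 : L (θ 0) - L θstar = 0 := by rw [hθ0]; ring
    refine le_trans (Finset.inf'_le _ (Finset.mem_range.mpr (by omega : 0 < T))) ?_
    rw [h0, ← hDz]
    simp
  -- main case: D > 0, σT > 0
  set s := Real.sqrt T with hsdef
  have hspos : 0 < s := Real.sqrt_pos.mpr hTpos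
  have hs2 : s ^ 2 = (T:ℝ) := Real.sq_sqrt (le_of_lt hTpos)
  have hαpos : 0 < α := by
    rw [hα]; positivity
  -- gradient norm bound
  have hG : ∀ t, ‖∑ i ∈ X t, w t i • gLT i (θ t)‖ ≤ σT := by
    intro t
    calc ‖∑ i ∈ X t, w t i • gLT i (θ t)‖
        ≤ ∑ i ∈ X t, ‖w t i • gLT i (θ t)‖ := norm_sum_le _ _
      _ ≤ ∑ i ∈ X t, w t i * σT := by
          refine Finset.sum_le_sum fun i hi => ?_
          rw [norm_smul, Real.norm_eq_abs, abs_of_nonneg (hw0 t i hi)]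
          exact mul_le_mul_of_nonneg_left (hσ t i hi _) (hw0 t i hi)
      _ = σT := by rw [← Finset.sum_mul, hw1 t, one_mul]
  -- per-step inequality
  have step : ∀ t : ℕ, 2 * α * (L (θ t) - L θstar)
      ≤ ‖θ t - θstar‖ ^ 2 - ‖θ (t + 1) - θstar‖ ^ 2 + α ^ 2 * σT ^ 2
        + 2 * α * D * ‖(∑ i ∈ X t, w t i • gLT i (θ t)) - gL (θ t)‖ := by
    intro t
    set G := ∑ i ∈ X t, w t i • gLT i (θ t) with hGdef
    have hexp : ‖θ (t + 1) - θstar‖ ^ 2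
        = ‖θ t - θstar‖ ^ 2 - 2 * α * inner ℝ (θ t - θstar) G + α ^ 2 * ‖G‖ ^ 2 := by
      rw [hupd t]
      have h1 : θ t - α • G - θstar = (θ t - θstar) - α • G := by abel
      rw [h1, norm_sub_sq_real, real_inner_smul_right, norm_smul, Real.norm_eq_abs,
        abs_of_pos hαpos, mul_pow]
      ring
    have hsplit : (inner ℝ (θ t - θstar) G : ℝ)
        = inner ℝ (gL (θ t)) (θ t - θstar) + inner ℝ (G - gL (θ t)) (θ t - θstar) := by
      rw [← inner_add_left, real_inner_comm]
      congr 1; abel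
    have hErr : -(‖G - gL (θ t)‖ * D) ≤ (inner ℝ (G - gL (θ t)) (θ t - θstar) : ℝ) := by
      have h1 : (inner ℝ (gL (θ t) - G) (θ t - θstar) : ℝ)
          ≤ ‖gL (θ t) - G‖ * ‖θ t - θstar‖ := real_inner_le_norm _ _
      have h2 : ‖gL (θ t) - G‖ = ‖G - gL (θ t)‖ := norm_sub_rev _ _
      have h3 : ‖G - gL (θ t)‖ * ‖θ t - θstar‖ ≤ ‖G - gL (θ t)‖ * D :=
        mul_le_mul_of_nonneg_left (hD t) (norm_nonneg _)
      have h4 : (inner ℝ (gL (θ t) - G) (θ t - θstar) : ℝ)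
          = - inner ℝ (G - gL (θ t)) (θ t - θstar) := by
        rw [← inner_neg_left]; congr 1; abel
      rw [h2, h4] at h1
      linarith
    have hGt := hG t
    have hGnn : (0:ℝ) ≤ ‖G‖ := norm_nonneg _
    have hc := hconvb t
    nlinarith [sq_nonneg α, mul_le_mul_of_nonneg_left hGt hGnn,
      mul_le_mul_of_nonneg_right hGt hσ0, sq_nonneg (‖G‖ - σT)]
  -- sum up
  set m := (Finset.range T).inf' (Finset.nonempty_range_iff.mpr (by omega))
    (fun t => L (θ t) - L θstar) with hmdef
  set S := ∑ t ∈ Finset.range T,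
    ‖(∑ i ∈ X t, w t i • gLT i (θ t)) - gL (θ t)‖ with hSdef
  have hSnn : 0 ≤ S := Finset.sum_nonneg fun t _ => norm_nonneg _
  have hsum : 2 * α * (T:ℝ) * m ≤ D ^ 2 + (T:ℝ) * (α ^ 2 * σT ^ 2) + 2 * α * D * S := by
    have h1 : (T:ℝ) * m ≤ ∑ t ∈ Finset.range T, (L (θ t) - L θstar) := by
      have := Finset.card_nsmul_le_sum (Finset.range T)
        (fun t => L (θ t) - L θstar) m (fun t ht => Finset.inf'_le _ ht)
      rwa [Finset.card_range, nsmul_eq_mul] at this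
    have h2 : ∑ t ∈ Finset.range T, (2 * α * (L (θ t) - L θstar))
        ≤ ∑ t ∈ Finset.range T, (‖θ t - θstar‖ ^ 2 - ‖θ (t + 1) - θstar‖ ^ 2
          + α ^ 2 * σT ^ 2
          + 2 * α * D * ‖(∑ i ∈ X t, w t i • gLT i (θ t)) - gL (θ t)‖) :=
      Finset.sum_le_sum fun t _ => step t
    have h3 : ∑ t ∈ Finset.range T, (‖θ t - θstar‖ ^ 2 - ‖θ (t + 1) - θstar‖ ^ 2
          + α ^ 2 * σT ^ 2
          + 2 * α * D * ‖(∑ i ∈ X t, w t i • gLT i (θ t)) - gL (θ t)‖)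
        = (‖θ 0 - θstar‖ ^ 2 - ‖θ T - θstar‖ ^ 2) + (T:ℝ) * (α ^ 2 * σT ^ 2)
          + 2 * α * D * S := by
      have hmul : ∑ t ∈ Finset.range T,
          (2 * α * D * ‖(∑ i ∈ X t, w t i • gLT i (θ t)) - gL (θ t)‖)
          = 2 * α * D * S := by
        rw [hSdef, Finset.mul_sum]
      rw [Finset.sum_add_distrib, Finset.sum_add_distrib, hmul,
        Finset.sum_range_sub' (fun t => ‖θ t - θstar‖ ^ 2), Finset.sum_const,
        Finset.card_range, nsmul_eq_mul]
    have h4 : ‖θ 0 - θstar‖ ^ 2 - ‖θ T - θstar‖ ^ 2 ≤ D ^ 2 := by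
      have ha := hD 0
      have hb : (0:ℝ) ≤ ‖θ T - θstar‖ ^ 2 := sq_nonneg _
      nlinarith [norm_nonneg (θ 0 - θstar)]
    have h5 : ∑ t ∈ Finset.range T, (2 * α * (L (θ t) - L θstar))
        = 2 * α * ∑ t ∈ Finset.range T, (L (θ t) - L θstar) := by
      rw [Finset.mul_sum]
    have h6 : 2 * α * ((T:ℝ) * m) ≤ 2 * α * ∑ t ∈ Finset.range T, (L (θ t) - L θstar) :=
      mul_le_mul_of_nonneg_left h1 (by linarith)
    calc 2 * α * (T:ℝ) * m = 2 * α * ((T:ℝ) * m) := by ring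
      _ ≤ 2 * α * ∑ t ∈ Finset.range T, (L (θ t) - L θstar) := h6
      _ = ∑ t ∈ Finset.range T, (2 * α * (L (θ t) - L θstar)) := h5.symm
      _ ≤ _ := h2
      _ = _ := h3
      _ ≤ D ^ 2 + (T:ℝ) * (α ^ 2 * σT ^ 2) + 2 * α * D * S := by linarith
  have hkey : 2 * α * (T:ℝ) * (D * σT / s + (D / T) * S)
      = D ^ 2 + (T:ℝ) * (α ^ 2 * σT ^ 2) + 2 * α * D * S := by
    rw [hα, ← hs2]
    have hσne : σT ≠ 0 := ne_of_gt hσpos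
    have hsne : s ≠ 0 := ne_of_gt hspos
    field_simp
    ring
  have hαT : 0 < 2 * α * (T:ℝ) := by positivity
  exact le_of_mul_le_mul_left (by rw [hkey]; exact hsum) hαT
end

section
/- Let F : 2^[n] → ℝ be monotone, γ-weakly submodular with γ ∈ (0,1], and satisfy F(∅) ≥ 0. Let S_0 = ∅, S_1, …, S_k be sets produced by the greedy algorithm. Then for every X* ⊆ [n] with |X*| ≤ k, F(S_k) ≥ (1 − e^{−γ}) · F(X*); that is, the greedy algorithm achieves a (1 − e^{−γ})-approximation for maximizing F under the cardinality constraint |X| ≤ k. -/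
open Finset

/-- The greedy algorithm achieves a `(1 - e^{-γ})`-approximation guarantee for
maximizing a monotone `γ`-weakly submodular function under a cardinality
constraint. -/
theorem greedy_weakly_submodular_approximation
    {n k : ℕ} (F : Finset (Fin n) → ℝ) (γ : ℝ)
    (hγ : γ ∈ Set.Ioc (0 : ℝ) 1)
    (hmono : ∀ S T : Finset (Fin n), S ⊆ T → F S ≤ F T)
    (hws : ∀ S T : Finset (Fin n), S ⊆ T → ∀ j ∉ T,
        F (insert j S) - F S ≥ γ * (F (insert j T) - F T))
    (h0 : 0 ≤ F ∅)
    (S : ℕ → Finset (Fin n)) (hS0 : S 0 = ∅)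
    (hgreedy : ∀ i : ℕ, ∃ e : Fin n, S (i + 1) = insert e (S i) ∧
        ∀ e' : Fin n, F (insert e' (S i)) - F (S i) ≤ F (insert e (S i)) - F (S i))
    (Xstar : Finset (Fin n)) (hcard : Xstar.card ≤ k) :
    F (S k) ≥ (1 - Real.exp (-γ)) * F Xstar := by
  obtain ⟨hγ0, hγ1⟩ := hγ
  -- telescoping lemma
  have key : ∀ A S0 : Finset (Fin n), Disjoint A S0 →
      γ * (F (A ∪ S0) - F S0) ≤ ∑ j ∈ A, (F (insert j S0) - F S0) := by
    intro A
    induction A using Finset.induction_on with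
    | empty => intro S0 _; simp
    | @insert a A' ha ih =>
      intro S0 hdisj
      have haS0 : a ∉ S0 := fun h => (Finset.disjoint_left.mp hdisj (mem_insert_self a A')) h
      have hdisj' : Disjoint A' S0 :=
        hdisj.mono_left (subset_insert a A')
      have haA'S0 : a ∉ A' ∪ S0 := by simp [ha, haS0]
      have h1 := hws S0 (A' ∪ S0) subset_union_right a haA'S0
      have h2 := ih S0 hdisj'
      rw [Finset.sum_insert ha, Finset.insert_union]
      linarith
  -- per-step progress
  have step : ∀ i, γ * (F Xstar - F (S i)) ≤ (k : ℝ) * (F (S (i+1)) - F (S i)) := by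
    intro i
    obtain ⟨e, hSe, hmax⟩ := hgreedy i
    have hdelta : 0 ≤ F (S (i+1)) - F (S i) := by
      rw [hSe]; linarith [hmono (S i) (insert e (S i)) (subset_insert _ _)]
    have h1 := key (Xstar \ S i) (S i) sdiff_disjoint
    have hunion : (Xstar \ S i) ∪ S i = Xstar ∪ S i := sdiff_union_self_eq_union
    have h2 : F Xstar ≤ F ((Xstar \ S i) ∪ S i) := by
      rw [hunion]; exact hmono _ _ subset_union_left
    have h3 : ∑ j ∈ Xstar \ S i, (F (insert j (S i)) - F (S i)) ≤
        ((Xstar \ S i).card : ℝ) * (F (S (i+1)) - F (S i)) := by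
      rw [hSe]
      calc ∑ j ∈ Xstar \ S i, (F (insert j (S i)) - F (S i))
          ≤ ∑ _j ∈ Xstar \ S i, (F (insert e (S i)) - F (S i)) :=
            Finset.sum_le_sum (fun j _ => hmax j)
        _ = ((Xstar \ S i).card : ℝ) * (F (insert e (S i)) - F (S i)) := by
            rw [Finset.sum_const, nsmul_eq_mul]
    have hcard' : ((Xstar \ S i).card : ℝ) ≤ (k : ℝ) := by
      have h := card_le_card (sdiff_subset : Xstar \ S i ⊆ Xstar)
      exact_mod_cast le_trans h hcard
    have hmul : ((Xstar \ S i).card : ℝ) * (F (S (i+1)) - F (S i)) ≤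
        (k : ℝ) * (F (S (i+1)) - F (S i)) :=
      mul_le_mul_of_nonneg_right hcard' hdelta
    nlinarith
  rcases Nat.eq_zero_or_pos k with hk | hk
  · subst hk
    have hX : Xstar = ∅ := card_eq_zero.mp (Nat.le_zero.mp hcard)
    rw [hS0, hX]
    nlinarith [Real.exp_pos (-γ)]
  · have hk0 : (0 : ℝ) < (k : ℝ) := by exact_mod_cast hk
    have hk1 : (1 : ℝ) ≤ (k : ℝ) := by exact_mod_cast hk
    set r : ℝ := 1 - γ / k with hr
    have hr0 : 0 ≤ r := by
      rw [hr, sub_nonneg, div_le_one hk0]; linarith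
    have hrec : ∀ i, F Xstar - F (S (i+1)) ≤ r * (F Xstar - F (S i)) := by
      intro i
      have h := step i
      have hdiv : γ * (F Xstar - F (S i)) / k ≤ F (S (i+1)) - F (S i) :=
        (div_le_iff₀ hk0).mpr (by linarith)
      have heq : r * (F Xstar - F (S i)) =
          (F Xstar - F (S i)) - γ * (F Xstar - F (S i)) / k := by
        rw [hr]; field_simp
      rw [heq]; linarith
    have gbound : ∀ i, F Xstar - F (S i) ≤ r ^ i * (F Xstar - F ∅) := by
      intro i
      induction i with
      | zero => rw [hS0, pow_zero, one_mul]
      | succ i ih =>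
        calc F Xstar - F (S (i+1)) ≤ r * (F Xstar - F (S i)) := hrec i
          _ ≤ r * (r ^ i * (F Xstar - F ∅)) := mul_le_mul_of_nonneg_left ih hr0
          _ = r ^ (i+1) * (F Xstar - F ∅) := by ring
    have hre : r ≤ Real.exp (-(γ / k)) := by
      linarith [Real.add_one_le_exp (-(γ / k))]
    have hpow : r ^ k ≤ Real.exp (-γ) := by
      calc r ^ k ≤ (Real.exp (-(γ / k))) ^ k := pow_le_pow_left₀ hr0 hre k
        _ = Real.exp ((k : ℝ) * (-(γ / k))) := (Real.exp_nat_mul _ k).symm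
        _ = Real.exp (-γ) := by
            congr 1
            field_simp
    have hg0 : 0 ≤ F Xstar - F ∅ := by
      linarith [hmono ∅ Xstar (empty_subset _)]
    have hXpos : 0 ≤ F Xstar := by linarith
    have hfinal : F Xstar - F (S k) ≤ Real.exp (-γ) * F Xstar := by
      calc F Xstar - F (S k) ≤ r ^ k * (F Xstar - F ∅) := gbound k
        _ ≤ Real.exp (-γ) * (F Xstar - F ∅) := mul_le_mul_of_nonneg_right hpow hg0
        _ ≤ Real.exp (-γ) * F Xstar := by
            have := Real.exp_pos (-γ)
            nlinarith
    linarith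
end

section
/- Assume L_max ≥ ‖u‖² (so that F_λ(∅) ≥ 0). Let S_k be the set produced by k steps of the greedy algorithm applied to F_λ. Then for every X* ⊆ [n] with |X*| ≤ k, F_λ(S_k) ≥ (1 − exp(−λ/(λ + k·∇max²))) · F_λ(X*); i.e., the greedy algorithm returns a (1 − exp(−λ/(λ + k∇max²)))-approximation for maximizing F_λ subject to the cardinality constraint |X| ≤ k. -/
open Finset

namespace GreedyGM

open RealInnerProductSpace

variable {n d : ℕ}

noncomputable def val (v : Fin n → EuclideanSpace ℝ (Fin d)) (u : EuclideanSpace ℝ (Fin d))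
    (lam : ℝ) (X : Finset (Fin n)) (w : Fin n → ℝ) : ℝ :=
  ‖(∑ i ∈ X, w i • v i) - u‖ ^ 2 + lam * ∑ i ∈ X, (w i) ^ 2

lemma val_nonneg (v : Fin n → EuclideanSpace ℝ (Fin d)) (u : EuclideanSpace ℝ (Fin d))
    {lam : ℝ} (hlam : 0 ≤ lam) (X : Finset (Fin n)) (w : Fin n → ℝ) :
    0 ≤ val v u lam X w := by
  have h1 : (0:ℝ) ≤ ∑ i ∈ X, (w i) ^ 2 := Finset.sum_nonneg fun i _ => sq_nonneg _
  have h2 : (0:ℝ) ≤ ‖(∑ i ∈ X, w i • v i) - u‖ ^ 2 := sq_nonneg _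
  have := mul_nonneg hlam h1
  unfold val; linarith

lemma bddBelow_valset (v : Fin n → EuclideanSpace ℝ (Fin d)) (u : EuclideanSpace ℝ (Fin d))
    {lam : ℝ} (hlam : 0 ≤ lam) (X : Finset (Fin n)) :
    BddBelow {r : ℝ | ∃ w : Fin n → ℝ, r = val v u lam X w} :=
  ⟨0, by rintro r ⟨w, rfl⟩; exact val_nonneg v u hlam X w⟩

lemma insert_bound (v : Fin n → EuclideanSpace ℝ (Fin d)) (u : EuclideanSpace ℝ (Fin d))
    {lam gradmax : ℝ} (hlam : 0 < lam) (hv : ∀ i, ‖v i‖ ≤ gradmax)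
    (A : Finset (Fin n)) (w : Fin n → ℝ) {e : Fin n} (he : e ∉ A) :
    sInf {r : ℝ | ∃ x : Fin n → ℝ, r = val v u lam (insert e A) x}
      ≤ val v u lam A w - ⟪(∑ j ∈ A, w j • v j) - u, v e⟫ ^ 2 / (lam + gradmax ^ 2) := by
  classical
  set r := (∑ j ∈ A, w j • v j) - u with hr
  set b := ⟪r, v e⟫ with hb
  set c := ‖v e‖ ^ 2 + lam with hc
  have hcpos : 0 < c := by positivity
  set α := -b / c with hα
  set x := Function.update w e α with hx
  have hmem : val v u lam (insert e A) x
      ∈ {r : ℝ | ∃ x : Fin n → ℝ, r = val v u lam (insert e A) x} := ⟨x, rfl⟩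
  refine le_trans (csInf_le (bddBelow_valset v u hlam.le _) hmem) ?_
  have hxA : ∀ j ∈ A, x j = w j := fun j hj =>
    Function.update_of_ne (ne_of_mem_of_not_mem hj he) _ _
  have hsum : ∑ j ∈ insert e A, x j • v j = α • v e + ∑ j ∈ A, w j • v j := by
    rw [Finset.sum_insert he]
    congr 1
    · rw [hx]; simp
    · exact Finset.sum_congr rfl fun j hj => by rw [hxA j hj]
  have hsq : ∑ j ∈ insert e A, (x j) ^ 2 = α ^ 2 + ∑ j ∈ A, (w j) ^ 2 := by
    rw [Finset.sum_insert he]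
    congr 1
    · rw [hx]; simp
    · exact Finset.sum_congr rfl fun j hj => by rw [hxA j hj]
  have hval : val v u lam (insert e A) x = val v u lam A w - b ^ 2 / c := by
    unfold val
    rw [hsum, hsq]
    have h1 : α • v e + (∑ j ∈ A, w j • v j) - u = r + α • v e := by rw [hr]; abel
    rw [h1, norm_add_sq_real, real_inner_smul_right]
    have h3 : ‖α • v e‖ ^ 2 = α ^ 2 * ‖v e‖ ^ 2 := by
      rw [norm_smul, mul_pow, Real.norm_eq_abs, sq_abs]
    rw [h3, hα, hb, hc]
    field_simp
    ring
  rw [hval]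
  have hle : b ^ 2 / (lam + gradmax ^ 2) ≤ b ^ 2 / c := by
    apply div_le_div_of_nonneg_left (sq_nonneg b) hcpos
    have h1 : ‖v e‖ ^ 2 ≤ gradmax ^ 2 := pow_le_pow_left₀ (norm_nonneg _) (hv e) 2
    rw [hc]; linarith
  linarith

lemma union_bound (v : Fin n → EuclideanSpace ℝ (Fin d)) (u : EuclideanSpace ℝ (Fin d))
    {lam : ℝ} (hlam : 0 < lam) {A T : Finset (Fin n)} (hAT : Disjoint A T)
    (w : Fin n → ℝ)
    (hFOC : ∀ i ∈ A, ⟪(∑ j ∈ A, w j • v j) - u, v i⟫ + lam * w i = 0) :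
    val v u lam A w - (∑ e ∈ T, ⟪(∑ j ∈ A, w j • v j) - u, v e⟫ ^ 2) / lam
      ≤ sInf {r : ℝ | ∃ x : Fin n → ℝ, r = val v u lam (A ∪ T) x} := by
  classical
  set r := (∑ j ∈ A, w j • v j) - u with hr
  refine le_csInf ⟨val v u lam (A ∪ T) 0, 0, rfl⟩ ?_
  rintro ρ ⟨x, rfl⟩
  set q := (∑ j ∈ A, (x j - w j) • v j) + ∑ j ∈ T, x j • v j with hq
  have hvec : (∑ j ∈ A ∪ T, x j • v j) - u = r + q := by
    rw [hr, hq, Finset.sum_union hAT]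
    simp_rw [sub_smul]
    rw [Finset.sum_sub_distrib]
    abel
  have hinner : ⟪r, q⟫ = (∑ j ∈ A, (x j - w j) * (-(lam * w j)))
      + ∑ j ∈ T, x j * ⟪r, v j⟫ := by
    rw [hq, inner_add_right, inner_sum, inner_sum]
    congr 1
    · apply Finset.sum_congr rfl
      intro j hj
      rw [real_inner_smul_right]
      have := hFOC j hj
      have hrv : ⟪r, v j⟫ = -(lam * w j) := by linarith
      rw [hrv]
    · exact Finset.sum_congr rfl fun j _ => real_inner_smul_right _ _ _
  have hval : val v u lam (A ∪ T) x = ‖r + q‖ ^ 2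
      + lam * ∑ j ∈ A, (x j) ^ 2 + lam * ∑ j ∈ T, (x j) ^ 2 := by
    unfold val
    rw [hvec, Finset.sum_union hAT, mul_add]
    ring
  have hnorm : ‖r + q‖ ^ 2 = ‖r‖ ^ 2 + 2 * ⟪r, q⟫ + ‖q‖ ^ 2 := norm_add_sq_real r q
  have hA : ∑ j ∈ A, (lam * (w j) ^ 2)
      ≤ ∑ j ∈ A, (2 * ((x j - w j) * (-(lam * w j))) + lam * (x j) ^ 2) := by
    apply Finset.sum_le_sum
    intro j _
    nlinarith [sq_nonneg (x j - w j), hlam.le]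
  have hT : ∑ j ∈ T, (-(⟪r, v j⟫ ^ 2) / lam)
      ≤ ∑ j ∈ T, (2 * (x j * ⟪r, v j⟫) + lam * (x j) ^ 2) := by
    apply Finset.sum_le_sum
    intro j _
    rw [div_le_iff₀ hlam]
    nlinarith [sq_nonneg (lam * x j + ⟪r, v j⟫)]
  have hvw : val v u lam A w = ‖r‖ ^ 2 + lam * ∑ j ∈ A, (w j) ^ 2 := by
    unfold val; rw [← hr]
  rw [hval, hnorm, hvw, hinner]
  rw [Finset.sum_add_distrib] at hA hT
  simp_rw [← Finset.mul_sum] at hA hT ⊢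
  have hsd : ∑ j ∈ T, (-(⟪r, v j⟫ ^ 2) / lam) = -(∑ j ∈ T, ⟪r, v j⟫ ^ 2) / lam := by
    rw [neg_div, ← Finset.sum_div, Finset.sum_neg_distrib, neg_div]
  rw [hsd, neg_div] at hT
  have hqn : (0:ℝ) ≤ ‖q‖ ^ 2 := sq_nonneg _
  linarith


lemma exists_min (v : Fin n → EuclideanSpace ℝ (Fin d)) (u : EuclideanSpace ℝ (Fin d))
    {lam : ℝ} (hlam : 0 < lam) (A : Finset (Fin n)) :
    ∃ w : Fin n → ℝ, ∀ x, val v u lam A w ≤ val v u lam A x := by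
  set h' : EuclideanSpace ℝ (Fin n) → ℝ :=
    fun w => ‖(∑ i ∈ A, w i • v i) - u‖ ^ 2 + lam * ∑ i, (w i) ^ 2 with hh'
  have hcont : Continuous h' := by
    apply Continuous.add
    · apply Continuous.pow
      apply Continuous.norm
      apply Continuous.sub _ continuous_const
      apply continuous_finset_sum
      intro i _
      exact ((EuclideanSpace.proj i).continuous).smul continuous_const
    · apply Continuous.mul continuous_const
      apply continuous_finset_sum
      intro i _
      exact ((EuclideanSpace.proj i).continuous).pow 2
  have hnorm : ∀ w : EuclideanSpace ℝ (Fin n), ‖w‖ ^ 2 = ∑ i, (w i) ^ 2 := by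
    intro w
    rw [EuclideanSpace.norm_eq, Real.sq_sqrt (Finset.sum_nonneg fun i _ => sq_nonneg _)]
    exact Finset.sum_congr rfl fun i _ => by rw [Real.norm_eq_abs, sq_abs]
  have hcoer : Filter.Tendsto h' (Filter.cocompact _) Filter.atTop := by
    have h1 : Filter.Tendsto (fun t : ℝ => lam * t ^ 2) Filter.atTop Filter.atTop :=
      (Filter.tendsto_pow_atTop (two_ne_zero)).const_mul_atTop hlam
    have h2 : Filter.Tendsto (fun w : EuclideanSpace ℝ (Fin n) => lam * ‖w‖ ^ 2)
        (Filter.cocompact _) Filter.atTop := h1.comp tendsto_norm_cocompact_atTop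
    apply Filter.tendsto_atTop_mono _ h2
    intro w
    have := sq_nonneg ‖(∑ i ∈ A, w i • v i) - u‖
    rw [hh']; simp only []
    rw [← hnorm w]
    linarith
  obtain ⟨wstar, hwstar⟩ := hcont.exists_forall_le hcoer
  classical
  refine ⟨fun i => if i ∈ A then wstar i else 0, ?_⟩
  intro x
  set wbar : Fin n → ℝ := fun i => if i ∈ A then wstar i else 0 with hwbar
  set xbar : Fin n → ℝ := fun i => if i ∈ A then x i else 0 with hxbar
  have hveq : ∀ f g : Fin n → ℝ, (∀ i ∈ A, f i = g i) →
      ∑ i ∈ A, f i • v i = ∑ i ∈ A, g i • v i :=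
    fun f g h => Finset.sum_congr rfl fun i hi => by rw [h i hi]
  have hseq : ∀ f g : Fin n → ℝ, (∀ i ∈ A, f i = g i) →
      ∑ i ∈ A, (f i) ^ 2 = ∑ i ∈ A, (g i) ^ 2 :=
    fun f g h => Finset.sum_congr rfl fun i hi => by rw [h i hi]
  have key : ∀ (f : Fin n → ℝ),
      val v u lam A (fun i => if i ∈ A then f i else 0)
      = h' (WithLp.toLp 2 (fun i => if i ∈ A then f i else 0 : Fin n → ℝ)) := by
    intro f
    unfold val; rw [hh']
    have h2 : ∑ i, ((fun i => if i ∈ A then f i else 0 : Fin n → ℝ) i) ^ 2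
        = ∑ i ∈ A, ((fun i => if i ∈ A then f i else 0 : Fin n → ℝ) i) ^ 2 := by
      rw [Finset.sum_subset (Finset.subset_univ A)]
      intro i _ hi
      simp [hi]
    simp only [PiLp.toLp_apply] at h2 ⊢
    rw [h2]
  have hwble : h' (WithLp.toLp 2 wbar) ≤ h' (wstar : EuclideanSpace ℝ (Fin n)) := by
    rw [hh']
    simp only [PiLp.toLp_apply]
    have h1 : ∑ i ∈ A, wbar i • v i = ∑ i ∈ A, wstar i • v i :=
      hveq _ _ fun i hi => by simp [hwbar, hi]
    have h2 : ∑ i, (wbar i) ^ 2 ≤ ∑ i, (wstar i) ^ 2 := by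
      apply Finset.sum_le_sum
      intro i _
      by_cases hi : i ∈ A <;> simp [hwbar, hi, sq_nonneg]
    rw [h1]
    have := mul_le_mul_of_nonneg_left h2 hlam.le
    linarith
  have hxv : val v u lam A x = val v u lam A xbar := by
    unfold val
    rw [hveq x xbar fun i hi => by simp [hxbar, hi],
        hseq x xbar fun i hi => by simp [hxbar, hi]]
  calc val v u lam A wbar = h' (WithLp.toLp 2 wbar) := key wstar
    _ ≤ h' wstar := hwble
    _ ≤ h' (WithLp.toLp 2 xbar) := hwstar (WithLp.toLp 2 xbar)
    _ = val v u lam A xbar := (key x).symm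
    _ = val v u lam A x := hxv.symm


lemma foc (v : Fin n → EuclideanSpace ℝ (Fin d)) (u : EuclideanSpace ℝ (Fin d))
    {lam : ℝ} (hlam : 0 < lam) (A : Finset (Fin n)) (w : Fin n → ℝ)
    (hmin : ∀ x, val v u lam A w ≤ val v u lam A x) {i : Fin n} (hi : i ∈ A) :
    ⟪(∑ j ∈ A, w j • v j) - u, v i⟫ + lam * w i = 0 := by
  classical
  set r := (∑ j ∈ A, w j • v j) - u with hr
  set b := ⟪r, v i⟫ + lam * w i with hb
  set a := ‖v i‖ ^ 2 + lam with ha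
  have hapos : 0 < a := by positivity
  have hkey : ∀ t : ℝ, 0 ≤ 2 * t * b + t ^ 2 * a := by
    intro t
    have h := hmin (Function.update w i (w i + t))
    have hsum : ∑ j ∈ A, (Function.update w i (w i + t)) j • v j
        = (∑ j ∈ A, w j • v j) + t • v i := by
      have h1 : ∀ j, (Function.update w i (w i + t)) j • v j
          = Function.update (fun j => w j • v j) i ((w i + t) • v i) j :=
        fun j => Function.apply_update (fun k x => x • v k) w i (w i + t) j
      simp_rw [h1]
      rw [Finset.sum_update_of_mem hi, Finset.sum_eq_sum_sdiff_singleton_add hi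
        (fun j => w j • v j), add_smul]
      abel
    have hsq : ∑ j ∈ A, ((Function.update w i (w i + t)) j) ^ 2
        = (∑ j ∈ A, (w j) ^ 2) + (2 * t * w i + t ^ 2) := by
      have h1 : ∀ j, ((Function.update w i (w i + t)) j) ^ 2
          = Function.update (fun j => (w j) ^ 2) i ((w i + t) ^ 2) j :=
        fun j => Function.apply_update (fun k x => x ^ 2) w i (w i + t) j
      simp_rw [h1]
      rw [Finset.sum_update_of_mem hi, Finset.sum_eq_sum_sdiff_singleton_add hi
        (fun j => (w j) ^ 2)]
      ring
    have hexp : val v u lam A (Function.update w i (w i + t))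
        = val v u lam A w + 2 * t * b + t ^ 2 * a := by
      unfold val
      rw [hsum, hsq]
      have : (∑ j ∈ A, w j • v j) + t • v i - u = r + t • v i := by rw [hr]; abel
      rw [this, norm_add_sq_real]
      have h2 : ⟪r, t • v i⟫ = t * ⟪r, v i⟫ := real_inner_smul_right r (v i) t
      have h3 : ‖t • v i‖ ^ 2 = t ^ 2 * ‖v i‖ ^ 2 := by
        rw [norm_smul, mul_pow, Real.norm_eq_abs, sq_abs]
      rw [h2, h3, hb, ha, hr]
      ring
    rw [hexp] at h
    linarith
  have h0 := hkey (-b / a)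
  have : 2 * (-b / a) * b + (-b / a) ^ 2 * a = -(b ^ 2) / a := by
    field_simp
    ring
  rw [this] at h0
  have hb2 : b ^ 2 ≤ 0 := by
    by_contra hc
    push_neg at hc
    have : -(b ^ 2) / a < 0 := div_neg_of_neg_of_pos (by linarith) hapos
    linarith
  have : b = 0 := by
    have := sq_nonneg b
    have hbb : b ^ 2 = 0 := le_antisymm hb2 (sq_nonneg b)
    exact pow_eq_zero_iff (two_ne_zero) |>.mp hbb
  rw [hb] at this
  exact this


noncomputable def EE (v : Fin n → EuclideanSpace ℝ (Fin d)) (u : EuclideanSpace ℝ (Fin d))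
    (lam : ℝ) (X : Finset (Fin n)) : ℝ :=
  sInf {r : ℝ | ∃ w : Fin n → ℝ, r = val v u lam X w}


lemma EE_mono (v : Fin n → EuclideanSpace ℝ (Fin d)) (u : EuclideanSpace ℝ (Fin d))
    {lam : ℝ} (hlam : 0 < lam) {A B : Finset (Fin n)} (hAB : A ⊆ B) :
    EE v u lam B ≤ EE v u lam A := by
  classical
  refine csInf_le_csInf (bddBelow_valset v u hlam.le B) ⟨val v u lam A 0, 0, rfl⟩ ?_
  rintro ρ ⟨w, rfl⟩
  refine ⟨fun i => if i ∈ A then w i else 0, ?_⟩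
  have h1 : ∑ i ∈ B, (fun i => if i ∈ A then w i else 0) i • v i = ∑ i ∈ A, w i • v i := by
    rw [← Finset.sum_subset hAB (fun i _ hi => by simp [hi])]
    exact Finset.sum_congr rfl fun i hi => by simp [hi]
  have h2 : ∑ i ∈ B, ((fun i => if i ∈ A then w i else 0) i) ^ 2 = ∑ i ∈ A, (w i) ^ 2 := by
    rw [← Finset.sum_subset hAB (fun i _ hi => by simp [hi])]
    exact Finset.sum_congr rfl fun i hi => by simp [hi]
  unfold val
  rw [h1, h2]

lemma EE_empty (v : Fin n → EuclideanSpace ℝ (Fin d)) (u : EuclideanSpace ℝ (Fin d))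
    {lam : ℝ} : EE v u lam ∅ = ‖u‖ ^ 2 := by
  have : {r : ℝ | ∃ w : Fin n → ℝ, r = val v u lam ∅ w} = {‖u‖ ^ 2} := by
    ext ρ
    simp only [Set.mem_setOf_eq, Set.mem_singleton_iff]
    constructor
    · rintro ⟨w, rfl⟩
      unfold val
      simp
    · rintro rfl
      exact ⟨0, by unfold val; simp⟩
  rw [EE, this, csInf_singleton]

lemma key_ineq (v : Fin n → EuclideanSpace ℝ (Fin d)) (u : EuclideanSpace ℝ (Fin d))
    {lam gradmax : ℝ} (hlam : 0 < lam) (hv : ∀ i, ‖v i‖ ≤ gradmax)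
    {A T : Finset (Fin n)} (hAT : Disjoint A T) :
    lam / (lam + gradmax ^ 2) * (EE v u lam A - EE v u lam (A ∪ T))
      ≤ ∑ e ∈ T, (EE v u lam A - EE v u lam (insert e A)) := by
  classical
  obtain ⟨w, hmin⟩ := exists_min v u hlam A
  have hD : (0:ℝ) < lam + gradmax ^ 2 := by positivity
  have hEA : EE v u lam A = val v u lam A w := by
    refine le_antisymm (csInf_le (bddBelow_valset v u hlam.le A) ⟨w, rfl⟩) ?_
    exact le_csInf ⟨val v u lam A 0, 0, rfl⟩ (by rintro ρ ⟨x, rfl⟩; exact hmin x)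
  set r := (∑ j ∈ A, w j • v j) - u with hr
  have hb := union_bound v u hlam hAT w (fun i hi => foc v u hlam A w hmin hi)
  have hsum : (∑ e ∈ T, ⟪r, v e⟫ ^ 2) / (lam + gradmax ^ 2)
      ≤ ∑ e ∈ T, (EE v u lam A - EE v u lam (insert e A)) := by
    rw [Finset.sum_div]
    apply Finset.sum_le_sum
    intro e he
    have heA : e ∉ A := Finset.disjoint_right.mp hAT he
    have := insert_bound v u hlam hv A w heA
    rw [hEA, EE]
    linarith
  refine le_trans ?_ hsum
  rw [hEA]
  rw [EE] at *
  have h1 : val v u lam A w - sInf {ρ : ℝ | ∃ x : Fin n → ℝ, ρ = val v u lam (A ∪ T) x}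
      ≤ (∑ e ∈ T, ⟪r, v e⟫ ^ 2) / lam := by linarith
  have h2 : 0 ≤ lam / (lam + gradmax ^ 2) := by positivity
  calc lam / (lam + gradmax ^ 2)
        * (val v u lam A w - sInf {ρ : ℝ | ∃ x : Fin n → ℝ, ρ = val v u lam (A ∪ T) x})
      ≤ lam / (lam + gradmax ^ 2) * ((∑ e ∈ T, ⟪r, v e⟫ ^ 2) / lam) :=
        mul_le_mul_of_nonneg_left h1 h2
    _ = (∑ e ∈ T, ⟪r, v e⟫ ^ 2) / (lam + gradmax ^ 2) := by
        field_simp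

end GreedyGM

open GreedyGM

/-- Corollary: the greedy algorithm (and orthogonal matching pursuit) returns a
`(1 - exp(-λ/(λ + k ∇max²)))`-approximation for maximizing the regularized
gradient-matching objective `F_λ` under the cardinality constraint `|X| ≤ k`. -/
theorem greedy_gradmatch_approximation
    {n d k : ℕ}
    (v : Fin n → EuclideanSpace ℝ (Fin d)) (u : EuclideanSpace ℝ (Fin d))
    (gradmax lam Lmax : ℝ) (hlam : 0 < lam)
    (hv : ∀ i, ‖v i‖ ≤ gradmax)
    (hLmax : ‖u‖ ^ 2 ≤ Lmax)
    (Elam Flam : Finset (Fin n) → ℝ)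
    (hE : ∀ X : Finset (Fin n),
        Elam X = sInf {r : ℝ | ∃ w : Fin n → ℝ,
          r = ‖(∑ i ∈ X, w i • v i) - u‖ ^ 2 + lam * ∑ i ∈ X, (w i) ^ 2})
    (hF : ∀ X : Finset (Fin n), Flam X = Lmax - Elam X)
    (S : ℕ → Finset (Fin n)) (hS0 : S 0 = ∅)
    (hgreedy : ∀ i : ℕ, ∃ e : Fin n, S (i + 1) = insert e (S i) ∧
        ∀ e' : Fin n,
          Flam (insert e' (S i)) - Flam (S i) ≤ Flam (insert e (S i)) - Flam (S i))
    (Xstar : Finset (Fin n)) (hcard : Xstar.card ≤ k) :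
    Flam (S k)
      ≥ (1 - Real.exp (-(lam / (lam + k * gradmax ^ 2)))) * Flam Xstar := by
  classical
  have hE' : ∀ X, Elam X = EE v u lam X := fun X => by rw [hE X]; rfl
  have hFmono : ∀ {A B : Finset (Fin n)}, A ⊆ B → Flam A ≤ Flam B := by
    intro A B hAB
    rw [hF, hF, hE', hE']
    have := EE_mono v u hlam hAB
    linarith
  have hFempty : 0 ≤ Flam ∅ := by
    rw [hF, hE', EE_empty]
    linarith
  have hFX0 : 0 ≤ Flam Xstar := le_trans hFempty (hFmono (Finset.empty_subset _))
  rcases Nat.eq_zero_or_pos k with hk0 | hkpos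
  · subst hk0
    have hX : Xstar = ∅ := Finset.card_eq_zero.mp (Nat.le_zero.mp hcard)
    rw [hS0, hX]
    have h0 : ((0:ℕ):ℝ) * gradmax ^ 2 = 0 := by norm_num
    rw [h0, add_zero, div_self hlam.ne']
    rw [ge_iff_le, sub_mul, one_mul]
    have := mul_nonneg (Real.exp_pos (-1)).le hFempty
    linarith
  · set D := lam + gradmax ^ 2 with hD
    have hDpos : 0 < D := by positivity
    have hkR : (0:ℝ) < (k:ℝ) := Nat.cast_pos.mpr hkpos
    set c := lam / ((k:ℝ) * D) with hc
    have hcpos : 0 < c := by positivity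
    have hc1 : c ≤ 1 := by
      rw [hc, div_le_one (by positivity)]
      have h1 : (1:ℝ) ≤ (k:ℝ) := Nat.one_le_cast.mpr hkpos
      nlinarith [sq_nonneg gradmax]
    have hstep : ∀ i, c * (Flam Xstar - Flam (S i)) ≤ Flam (S (i+1)) - Flam (S i) := by
      intro i
      obtain ⟨e, hSe, hmax⟩ := hgreedy i
      set A := S i with hA
      have hgain0 : 0 ≤ Flam (S (i+1)) - Flam A := by
        rw [hSe]
        have := hFmono (Finset.subset_insert e A)
        linarith
      by_cases hδ : Flam Xstar - Flam A ≤ 0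
      · have := mul_nonpos_of_nonneg_of_nonpos hcpos.le hδ
        linarith
      · push_neg at hδ
        set T := Xstar \ A with hT
        have hdisj : Disjoint A T := Finset.disjoint_sdiff
        have hTne : T.Nonempty := by
          rw [Finset.nonempty_iff_ne_empty]
          intro h
          have hsub : Xstar ⊆ A := Finset.sdiff_eq_empty_iff_subset.mp h
          have := hFmono hsub
          linarith
        have htk : (T.card : ℝ) ≤ (k:ℝ) := by
          have h1 : T.card ≤ Xstar.card := Finset.card_le_card (Finset.sdiff_subset)
          exact_mod_cast le_trans h1 hcard
        have htpos : 0 < (T.card : ℝ) := by exact_mod_cast hTne.card_pos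
        have hkey := key_ineq v u hlam hv hdisj
        have hAT : A ∪ T = A ∪ Xstar := Finset.union_sdiff_self_eq_union
        have hmono1 : EE v u lam (A ∪ T) ≤ EE v u lam Xstar := by
          rw [hAT]
          exact EE_mono v u hlam Finset.subset_union_right
        set gain := Flam (S (i+1)) - Flam A with hgain
        have hsum_le : ∑ e' ∈ T, (EE v u lam A - EE v u lam (insert e' A))
            ≤ (T.card : ℝ) * gain := by
          have h1 : ∀ e' ∈ T, EE v u lam A - EE v u lam (insert e' A) ≤ gain := by
            intro e' _
            have h2 := hmax e'
            rw [hgain, hSe]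
            have h3 : Flam (insert e' A) - Flam A
                = EE v u lam A - EE v u lam (insert e' A) := by
              rw [hF, hF, hE', hE']
              ring
            linarith
          calc ∑ e' ∈ T, (EE v u lam A - EE v u lam (insert e' A))
              ≤ ∑ _e' ∈ T, gain := Finset.sum_le_sum h1
            _ = (T.card : ℝ) * gain := by rw [Finset.sum_const, nsmul_eq_mul]
        have hdelta : Flam Xstar - Flam A ≤ EE v u lam A - EE v u lam (A ∪ T) := by
          rw [hF, hF, hE', hE']
          linarith
        have h2 : lam / D * (Flam Xstar - Flam A)
            ≤ (T.card : ℝ) * gain := by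
          calc lam / D * (Flam Xstar - Flam A)
              ≤ lam / D * (EE v u lam A - EE v u lam (A ∪ T)) :=
                mul_le_mul_of_nonneg_left hdelta (by positivity)
            _ ≤ ∑ e' ∈ T, (EE v u lam A - EE v u lam (insert e' A)) := hkey
            _ ≤ (T.card : ℝ) * gain := hsum_le
        have h3 : (T.card : ℝ) * gain ≤ (k:ℝ) * gain :=
          mul_le_mul_of_nonneg_right htk hgain0
        have h4 : lam / D * (Flam Xstar - Flam A) ≤ (k:ℝ) * gain := le_trans h2 h3
        have h5 : c * (Flam Xstar - Flam A) = (lam / D * (Flam Xstar - Flam A)) / (k:ℝ) := by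
          rw [hc]
          field_simp
        rw [h5, div_le_iff₀ hkR]
        have h6 : (k:ℝ) * gain = gain * (k:ℝ) := mul_comm _ _
        linarith
    have hrec : ∀ i, Flam Xstar - Flam (S i) ≤ (1 - c)^i * (Flam Xstar - Flam (S 0)) := by
      intro i
      induction i with
      | zero => simp
      | succ i ih =>
        have h := hstep i
        calc Flam Xstar - Flam (S (i+1)) ≤ (1 - c) * (Flam Xstar - Flam (S i)) := by linarith
          _ ≤ (1 - c) * ((1 - c)^i * (Flam Xstar - Flam (S 0))) :=
              mul_le_mul_of_nonneg_left ih (by linarith)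
          _ = (1 - c)^(i+1) * (Flam Xstar - Flam (S 0)) := by ring
    have h5 := hrec k
    rw [hS0] at h5
    have hpow0 : (0:ℝ) ≤ (1 - c)^k := pow_nonneg (by linarith) k
    have h6 : (1 - c)^k * (Flam Xstar - Flam ∅) ≤ (1 - c)^k * Flam Xstar :=
      mul_le_mul_of_nonneg_left (by linarith) hpow0
    have h7 : (1 - c)^k ≤ Real.exp (-c) ^ k :=
      pow_le_pow_left₀ (by linarith) (by linarith [Real.add_one_le_exp (-c)]) k
    have h8 : Real.exp (-c) ^ k = Real.exp (-(c * (k:ℝ))) := by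
      rw [← Real.exp_nat_mul]
      congr 1
      ring
    have h9 : Real.exp (-(c * (k:ℝ))) ≤ Real.exp (-(lam / (lam + (k:ℝ) * gradmax ^ 2))) := by
      rw [Real.exp_le_exp]
      have hck : c * (k:ℝ) = lam / D := by
        rw [hc]
        field_simp
      have hle : lam / (lam + (k:ℝ) * gradmax ^ 2) ≤ lam / D := by
        apply div_le_div_of_nonneg_left hlam.le hDpos
        have h1 : (1:ℝ) ≤ (k:ℝ) := Nat.one_le_cast.mpr hkpos
        rw [hD]
        nlinarith [sq_nonneg gradmax]
      rw [hck]
      linarith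
    have h10 : (1 - c)^k * Flam Xstar
        ≤ Real.exp (-(lam / (lam + (k:ℝ) * gradmax ^ 2))) * Flam Xstar := by
      apply mul_le_mul_of_nonneg_right _ hFX0
      calc (1 - c)^k ≤ Real.exp (-c) ^ k := h7
        _ = Real.exp (-(c * (k:ℝ))) := h8
        _ ≤ _ := h9
    rw [ge_iff_le, sub_mul, one_mul]
    linarith
end

section
/- Let F : 2^[n] → ℝ be monotone, γ-weakly submodular with γ ∈ (0,1], satisfy F(∅) ≥ 0, and be bounded above by L_max with L_max > 0. Fix ε ∈ (0, L_max] and let X* be a minimum-cardinality subset with F(X*) ≥ L_max − ε. Then after at most ⌈(|X*|/γ) · ln(L_max/ε)⌉ steps of the greedy algorithm, the greedy set S satisfies F(X*) − F(S) ≤ ε; in particular, the greedy algorithm run with this stopping criterion returns a set S with |S| ≤ (|X*|/γ) · log(L_max/ε). -/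
open Finset

lemma key_weak_submod {n : ℕ} (F : Finset (Fin n) → ℝ) (γ : ℝ) (hγpos : 0 < γ)
    (hmono : ∀ S T : Finset (Fin n), S ⊆ T → F S ≤ F T)
    (hws : ∀ S T : Finset (Fin n), S ⊆ T → ∀ j ∉ T,
        F (insert j S) - F S ≥ γ * (F (insert j T) - F T)) :
    ∀ (A B : Finset (Fin n)), γ * (F (B ∪ A) - F B) ≤ ∑ j ∈ A, (F (insert j B) - F B) := by
  intro A
  induction A using Finset.induction_on with
  | empty => intro B; simp
  | @insert a A ha ih =>
    intro B
    rw [Finset.sum_insert ha]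
    by_cases haB : a ∈ B ∪ A
    · have h1 : B ∪ insert a A = B ∪ A := by
        ext x; simp only [Finset.mem_union, Finset.mem_insert]
        constructor
        · rintro (h | rfl | h)
          · exact Or.inl h
          · simpa using haB
          · exact Or.inr h
        · rintro (h | h); exact Or.inl h; exact Or.inr (Or.inr h)
      have h2 : 0 ≤ F (insert a B) - F B := by
        have := hmono B (insert a B) (Finset.subset_insert a B); linarith
      have := ih B
      rw [h1]; linarith
    · have h1 : B ∪ insert a A = insert a (B ∪ A) := by
        ext x; simp [Finset.mem_union, Finset.mem_insert]
      have h2 := hws B (B ∪ A) Finset.subset_union_left a haB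
      have h3 := ih B
      rw [h1]
      nlinarith [h2, h3]

/-- Theorem 3 of Grad-Match (weakly submodular set cover): for a monotone
`γ`-weakly submodular function `F` bounded above by `L_max`, after at most
`⌈(|X*|/γ) log(L_max/ε)⌉` greedy steps the greedy set `S` satisfies
`F(X*) - F(S) ≤ ε`, where `X*` is a minimum-cardinality set with
`F(X*) ≥ L_max - ε`. -/
theorem greedy_weak_submodular_set_cover
    {n : ℕ} (F : Finset (Fin n) → ℝ) (γ Lmax ε : ℝ)
    (hγ : γ ∈ Set.Ioc (0 : ℝ) 1)
    (hmono : ∀ S T : Finset (Fin n), S ⊆ T → F S ≤ F T)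
    (hws : ∀ S T : Finset (Fin n), S ⊆ T → ∀ j ∉ T,
        F (insert j S) - F S ≥ γ * (F (insert j T) - F T))
    (h0 : 0 ≤ F ∅)
    (hLmax : 0 < Lmax)
    (hbound : ∀ X : Finset (Fin n), F X ≤ Lmax)
    (hε : ε ∈ Set.Ioc (0 : ℝ) Lmax)
    (Xstar : Finset (Fin n)) (hXstar : Lmax - ε ≤ F Xstar)
    (hXstarMin : ∀ Y : Finset (Fin n), Lmax - ε ≤ F Y → Xstar.card ≤ Y.card)
    (S : ℕ → Finset (Fin n)) (hS0 : S 0 = ∅)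
    (hgreedy : ∀ i : ℕ, ∃ e : Fin n, S (i + 1) = insert e (S i) ∧
        ∀ e' : Fin n, F (insert e' (S i)) - F (S i) ≤ F (insert e (S i)) - F (S i)) :
    F Xstar - F (S ⌈((Xstar.card : ℝ) / γ) * Real.log (Lmax / ε)⌉₊) ≤ ε := by
  obtain ⟨hγpos, hγ1⟩ := hγ
  obtain ⟨hεpos, hεL⟩ := hε
  set T := ⌈((Xstar.card : ℝ) / γ) * Real.log (Lmax / ε)⌉₊ with hT
  by_cases hk0 : Xstar.card = 0
  · -- Xstar = ∅, so F Xstar ≤ F (S T)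
    have hX : Xstar = ∅ := Finset.card_eq_zero.mp hk0
    have := hmono ∅ (S T) (Finset.empty_subset _)
    rw [hX]; linarith
  · have hk1 : (1 : ℝ) ≤ (Xstar.card : ℝ) := by exact_mod_cast Nat.one_le_iff_ne_zero.mpr hk0
    have hkpos : (0 : ℝ) < (Xstar.card : ℝ) := by linarith
    set k : ℝ := (Xstar.card : ℝ)
    set c : ℝ := γ / k with hc
    have hcpos : 0 < c := div_pos hγpos hkpos
    have hc1 : c ≤ 1 := by
      rw [hc, div_le_one hkpos]; linarith
    -- per-step inequality
    have step : ∀ i : ℕ, γ * (F Xstar - F (S i)) ≤ k * (F (S (i + 1)) - F (S i)) := by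
      intro i
      obtain ⟨e, hSe, hmax⟩ := hgreedy i
      have h1 := key_weak_submod F γ hγpos hmono hws Xstar (S i)
      have h2 : ∑ j ∈ Xstar, (F (insert j (S i)) - F (S i))
          ≤ Xstar.card • (F (insert e (S i)) - F (S i)) :=
        Finset.sum_le_card_nsmul _ _ _ (fun j _ => hmax j)
      have h3 : F Xstar ≤ F (S i ∪ Xstar) := hmono _ _ Finset.subset_union_right
      have h4 : γ * (F Xstar - F (S i)) ≤ γ * (F (S i ∪ Xstar) - F (S i)) := by
        apply mul_le_mul_of_nonneg_left _ (le_of_lt hγpos); linarith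
      rw [hSe]
      calc γ * (F Xstar - F (S i)) ≤ ∑ j ∈ Xstar, (F (insert j (S i)) - F (S i)) :=
            le_trans h4 h1
        _ ≤ Xstar.card • (F (insert e (S i)) - F (S i)) := h2
        _ = k * (F (insert e (S i)) - F (S i)) := by
            rw [nsmul_eq_mul]
    -- geometric decay
    have decay : ∀ i : ℕ, F Xstar - F (S i) ≤ (1 - c) ^ i * Lmax := by
      intro i
      induction i with
      | zero =>
        simp only [pow_zero, one_mul, hS0]
        have := hbound Xstar; linarith
      | succ i ih =>
        have hstep := step i
        have h5 : F Xstar - F (S (i + 1)) ≤ (1 - c) * (F Xstar - F (S i)) := by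
          have hk' : k ≠ 0 := ne_of_gt hkpos
          have : c * (F Xstar - F (S i)) ≤ F (S (i + 1)) - F (S i) := by
            rw [hc, div_mul_eq_mul_div, div_le_iff₀ hkpos]
            linarith [hstep]
          linarith
        calc F Xstar - F (S (i + 1)) ≤ (1 - c) * (F Xstar - F (S i)) := h5
          _ ≤ (1 - c) * ((1 - c) ^ i * Lmax) :=
              mul_le_mul_of_nonneg_left ih (by linarith)
          _ = (1 - c) ^ (i + 1) * Lmax := by ring
    -- final bound
    have hTd := decay T
    have hexp : (1 - c) ^ T ≤ Real.exp (-(c * T)) := by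
      calc (1 - c) ^ T ≤ (Real.exp (-c)) ^ T := by
            apply pow_le_pow_left₀ (by linarith)
            linarith [Real.add_one_le_exp (-c)]
        _ = Real.exp (-(c * T)) := by
            rw [← Real.exp_nat_mul]; ring_nf
    have hcT : Real.log (Lmax / ε) ≤ c * T := by
      have hle : ((k / γ) * Real.log (Lmax / ε)) ≤ (T : ℝ) := Nat.le_ceil _
      have := mul_le_mul_of_nonneg_left hle (le_of_lt hcpos)
      have heq : c * ((k / γ) * Real.log (Lmax / ε)) = Real.log (Lmax / ε) := by
        rw [hc]; field_simp
      linarith [heq ▸ this]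
    have hfin : Real.exp (-(c * T)) * Lmax ≤ ε := by
      have h6 : Real.exp (-(c * T)) ≤ ε / Lmax := by
        have h7 : ε / Lmax = Real.exp (Real.log (ε / Lmax)) :=
          (Real.exp_log (div_pos hεpos hLmax)).symm
        rw [h7]
        apply Real.exp_le_exp.mpr
        have h8 : Real.log (ε / Lmax) = - Real.log (Lmax / ε) := by
          rw [← Real.log_inv]; congr 1; field_simp
        rw [h8]; linarith
      calc Real.exp (-(c * T)) * Lmax ≤ (ε / Lmax) * Lmax :=
            mul_le_mul_of_nonneg_right h6 (le_of_lt hLmax)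
        _ = ε := by field_simp
    have hpow : (1 - c) ^ T * Lmax ≤ Real.exp (-(c * T)) * Lmax :=
      mul_le_mul_of_nonneg_right hexp (le_of_lt hLmax)
    linarith
end

section
/- Let F : 2^[n] → ℝ be monotone and γ-weakly submodular with γ ∈ (0,1], let X_i ⊆ [n] be any set, let e_i ∈ argmax_{e∈[n]} (F(X_i ∪ {e}) − F(X_i)) be a greedy element, and set X_{i+1} = X_i ∪ {e_i}. Then for every nonempty X* ⊆ [n], F(X*) − F(X_i) ≤ (|X*|/γ) · (F(X_{i+1}) − F(X_i)); equivalently, F(X*) − F(X_{i+1}) ≤ (1 − γ/|X*|) · (F(X*) − F(X_i)). -/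
open Finset

lemma greedy_aux {n : ℕ} (F : Finset (Fin n) → ℝ) (γ : ℝ) (hγ0 : 0 < γ)
    (hws : ∀ S T : Finset (Fin n), S ⊆ T → ∀ j ∉ T,
        F (insert j S) - F S ≥ γ * (F (insert j T) - F T)) :
    ∀ T S : Finset (Fin n), S ⊆ T →
      γ * (F T - F S) ≤ ∑ j ∈ T \ S, (F (insert j S) - F S) := by
  intro T
  induction T using Finset.strongInduction with
  | _ T ih =>
    intro S hST
    rcases hST.eq_or_ssubset with rfl | hss
    · simp
    · obtain ⟨j, hjT, hjS⟩ := exists_of_ssubset hss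
      have hT' : T.erase j ⊂ T := erase_ssubset hjT
      have hS' : S ⊆ T.erase j := subset_erase.2 ⟨hST, hjS⟩
      have h1 := ih _ hT' S hS'
      have h2 := hws S (T.erase j) hS' j (notMem_erase j T)
      rw [insert_erase hjT] at h2
      have hset : T \ S = insert j (T.erase j \ S) := by
        rw [erase_sdiff_comm, insert_erase]
        simp [mem_sdiff, hjT, hjS]
      rw [hset, sum_insert (by simp)]
      linarith

/-- One-step greedy recursion for monotone `γ`-weakly submodular functions:
if `e` is a greedy element for the current set `X_i`, then
`F(X*) - F(X_i) ≤ (|X*|/γ)(F(X_{i+1}) - F(X_i))`, equivalently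
`F(X*) - F(X_{i+1}) ≤ (1 - γ/|X*|)(F(X*) - F(X_i))`. -/
theorem greedy_step_recursion
    {n : ℕ} (F : Finset (Fin n) → ℝ) (γ : ℝ)
    (hγ : γ ∈ Set.Ioc (0 : ℝ) 1)
    (hmono : ∀ S T : Finset (Fin n), S ⊆ T → F S ≤ F T)
    (hws : ∀ S T : Finset (Fin n), S ⊆ T → ∀ j ∉ T,
        F (insert j S) - F S ≥ γ * (F (insert j T) - F T))
    (Xi Xi1 : Finset (Fin n)) (e : Fin n)
    (hgreedy : ∀ e' : Fin n, F (insert e' Xi) - F Xi ≤ F (insert e Xi) - F Xi)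
    (hXi1 : Xi1 = insert e Xi)
    (Xstar : Finset (Fin n)) (hne : Xstar.Nonempty) :
    F Xstar - F Xi ≤ ((Xstar.card : ℝ) / γ) * (F Xi1 - F Xi) ∧
    F Xstar - F Xi1 ≤ (1 - γ / (Xstar.card : ℝ)) * (F Xstar - F Xi) := by
  obtain ⟨hγ0, hγ1⟩ := hγ
  set Δ : ℝ := F Xi1 - F Xi with hΔ
  have hΔ0 : 0 ≤ Δ := by
    rw [hΔ, hXi1]
    have := hmono Xi (insert e Xi) (subset_insert e Xi)
    linarith
  have hc0 : (0 : ℝ) < (Xstar.card : ℝ) := by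
    exact_mod_cast card_pos.2 hne
  have key : γ * (F Xstar - F Xi) ≤ (Xstar.card : ℝ) * Δ := by
    have htel := greedy_aux F γ hγ0 hws (Xstar ∪ Xi) Xi (subset_union_right)
    have hbound : ∑ j ∈ (Xstar ∪ Xi) \ Xi, (F (insert j Xi) - F Xi)
        ≤ ((Xstar ∪ Xi) \ Xi).card * Δ := by
      rw [hΔ, hXi1]
      calc ∑ j ∈ (Xstar ∪ Xi) \ Xi, (F (insert j Xi) - F Xi)
          ≤ ∑ _j ∈ (Xstar ∪ Xi) \ Xi, (F (insert e Xi) - F Xi) :=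
            sum_le_sum fun j _ => hgreedy j
        _ = ((Xstar ∪ Xi) \ Xi).card * (F (insert e Xi) - F Xi) := by
            rw [sum_const, nsmul_eq_mul]
    have hcard : (((Xstar ∪ Xi) \ Xi).card : ℝ) ≤ (Xstar.card : ℝ) := by
      have : (Xstar ∪ Xi) \ Xi ⊆ Xstar := by
        intro x hx
        simp only [mem_sdiff, mem_union] at hx
        tauto
      exact_mod_cast card_le_card this
    have hmono' : F Xstar ≤ F (Xstar ∪ Xi) := hmono _ _ subset_union_left
    nlinarith [mul_le_mul_of_nonneg_right hcard hΔ0]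
  have h1 : F Xstar - F Xi ≤ ((Xstar.card : ℝ) / γ) * Δ := by
    rw [div_mul_eq_mul_div, le_div_iff₀ hγ0]
    nlinarith
  refine ⟨h1, ?_⟩
  have h2 : (γ / (Xstar.card : ℝ)) * (F Xstar - F Xi) ≤ Δ := by
    rw [div_mul_eq_mul_div, div_le_iff₀ hc0]
    nlinarith
  have : F Xstar - F Xi1 = (F Xstar - F Xi) - Δ := by rw [hΔ]; ring
  rw [this]
  nlinarith
end

section
/- (Grad-Match/OMP convergence, strongly convex case.) Suppose the weights satisfy, at every iteration t, ‖Σ_{i∈X^t} w^t_i ∇L_T^i(θ_t) − ∇L(θ_t)‖ + λ ‖w^t‖² ≤ ε for some λ ≥ 0 and ε > 0 (i.e., E_λ(X^t) ≤ ε). Assume ‖∇L_T^i(θ)‖ ≤ σ_T for every i and θ, assume L is μ-strongly convex, and use the learning rate schedule α_t = 2/(μ(1+t)). Then min_{1 ≤ t ≤ T} (L(θ_t) − L(θ*)) ≤ 2 σ_T²/(μ(T+1)) + D ε. -/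
open Finset
open scoped RealInnerProductSpace

set_option maxHeartbeats 1000000 in
/-- Grad-Match/OMP convergence, strongly convex case: if at every iteration the
regularized gradient-matching error `E_λ(X^t)` is at most `ε`, then gradient descent
with the selected weighted subsets converges at rate `O(1/T)` up to `D ε`. -/
theorem gradmatch_omp_convergence_strongly_convex
    {d : ℕ} {ι : Type*}
    (L : EuclideanSpace ℝ (Fin d) → ℝ)
    (gL : EuclideanSpace ℝ (Fin d) → EuclideanSpace ℝ (Fin d))
    (hL : ∀ θ, HasGradientAt L (gL θ) θ)
    (μ : ℝ) (hμ : 0 < μ)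
    (hstrong : ∀ x y : EuclideanSpace ℝ (Fin d),
        L x + ⟪gL x, y - x⟫ + (μ / 2) * ‖y - x‖ ^ 2 ≤ L y)
    (θstar : EuclideanSpace ℝ (Fin d))
    (hmin : ∀ θ, L θstar ≤ L θ)
    (LT : ι → EuclideanSpace ℝ (Fin d) → ℝ)
    (gLT : ι → EuclideanSpace ℝ (Fin d) → EuclideanSpace ℝ (Fin d))
    (hLT : ∀ i θ, HasGradientAt (LT i) (gLT i θ) θ)
    (X : ℕ → Finset ι) (w : ℕ → ι → ℝ)
    (hw0 : ∀ t, ∀ i ∈ X t, 0 ≤ w t i)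
    (hw1 : ∀ t, ∑ i ∈ X t, w t i = 1)
    (lam ε : ℝ) (hlam : 0 ≤ lam) (hε : 0 < ε)
    (θ : ℕ → EuclideanSpace ℝ (Fin d))
    (hE : ∀ t, ‖(∑ i ∈ X t, w t i • gLT i (θ t)) - gL (θ t)‖
            + lam * ∑ i ∈ X t, (w t i) ^ 2 ≤ ε)
    (D σT : ℝ) (T : ℕ) (hT : 1 ≤ T)
    (hD : ∀ t, ‖θ t - θstar‖ ≤ D)
    (hσ : ∀ i, ∀ x, ‖gLT i x‖ ≤ σT)
    (α : ℕ → ℝ) (hα : ∀ t, α t = 2 / (μ * (1 + t)))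
    (hupd : ∀ t, θ (t + 1) = θ t - α t • ∑ i ∈ X t, w t i • gLT i (θ t)) :
    (Finset.Icc 1 T).inf' (by simp [Finset.nonempty_Icc]; omega)
        (fun t => L (θ t) - L θstar)
      ≤ 2 * σT ^ 2 / (μ * (T + 1)) + D * ε := by
  classical
  set g : ℕ → EuclideanSpace ℝ (Fin d) := fun t => ∑ i ∈ X t, w t i • gLT i (θ t) with hgdef
  set r : ℕ → ℝ := fun t => ‖θ t - θstar‖ with hrdef
  have hr0 : ∀ t, 0 ≤ r t := fun t => norm_nonneg _
  have hD0 : 0 ≤ D := le_trans (hr0 0) (hD 0)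
  have herr : ∀ t, ‖g t - gL (θ t)‖ ≤ ε := by
    intro t
    have h1 : 0 ≤ lam * ∑ i ∈ X t, (w t i) ^ 2 :=
      mul_nonneg hlam (Finset.sum_nonneg fun i _ => sq_nonneg _)
    have h2 := hE t
    simp only [hgdef]
    linarith
  have hgnorm : ∀ t, ‖g t‖ ≤ σT := by
    intro t
    calc ‖g t‖ ≤ ∑ i ∈ X t, ‖w t i • gLT i (θ t)‖ := norm_sum_le _ _
      _ = ∑ i ∈ X t, w t i * ‖gLT i (θ t)‖ := by
          refine Finset.sum_congr rfl fun i hi => ?_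
          rw [norm_smul, Real.norm_eq_abs, abs_of_nonneg (hw0 t i hi)]
      _ ≤ ∑ i ∈ X t, w t i * σT :=
          Finset.sum_le_sum fun i hi =>
            mul_le_mul_of_nonneg_left (hσ i (θ t)) (hw0 t i hi)
      _ = σT := by rw [← Finset.sum_mul, hw1, one_mul]
  have hσ0 : 0 ≤ σT := le_trans (norm_nonneg _) (hgnorm 0)
  -- strong convexity lower bound on the inner product
  have hsc : ∀ t, L (θ t) - L θstar + μ / 2 * r t ^ 2 ≤ ⟪gL (θ t), θ t - θstar⟫ := by
    intro t
    have h := hstrong (θ t) θstar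
    have h1 : ⟪gL (θ t), θstar - θ t⟫ = -⟪gL (θ t), θ t - θstar⟫ := by
      rw [← inner_neg_right]
      congr 1
      abel
    have h2 : ‖θstar - θ t‖ = r t := norm_sub_rev _ _
    rw [h1, h2] at h
    linarith
  -- inner product lower bound with error term
  have hipge : ∀ t, L (θ t) - L θstar + μ / 2 * r t ^ 2 - ε * D ≤ ⟪g t, θ t - θstar⟫ := by
    intro t
    have hsub : ⟪g t - gL (θ t), θ t - θstar⟫ = ⟪g t, θ t - θstar⟫ - ⟪gL (θ t), θ t - θstar⟫ :=
      inner_sub_left _ _ _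
    have habs := abs_real_inner_le_norm (g t - gL (θ t)) (θ t - θstar)
    have hmul : ‖g t - gL (θ t)‖ * ‖θ t - θstar‖ ≤ ε * D :=
      mul_le_mul (herr t) (hD t) (norm_nonneg _) hε.le
    have hlow : -(ε * D) ≤ ⟪g t - gL (θ t), θ t - θstar⟫ := by
      have := abs_le.mp habs
      linarith [this.1]
    have := hsc t
    linarith [hsub ▸ hlow]
  set A : ℕ → ℝ := fun n => μ * (n : ℝ) * ((n : ℝ) - 1) / 4 * r n ^ 2 with hAdef
  -- per-step inequality
  have hstep : ∀ t : ℕ, (t : ℝ) * (L (θ t) - L θstar)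
      ≤ A t - A (t + 1) + σT ^ 2 / μ + (t : ℝ) * (ε * D) := by
    intro t
    have ht0 : (0 : ℝ) ≤ (t : ℝ) := Nat.cast_nonneg t
    have hc : (0 : ℝ) < 1 + (t : ℝ) := by positivity
    have hμc : (0 : ℝ) < μ * (1 + (t : ℝ)) := mul_pos hμ hc
    have hαt : α t = 2 / (μ * (1 + (t : ℝ))) := hα t
    -- norm expansion
    have hmove : θ (t + 1) - θstar = (θ t - θstar) - α t • g t := by
      rw [hupd t]
      abel
    have hnorm : r (t + 1) ^ 2
        = r t ^ 2 - 2 * α t * ⟪g t, θ t - θstar⟫ + (α t) ^ 2 * ‖g t‖ ^ 2 := by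
      simp only [hrdef]
      rw [hmove, norm_sub_sq_real, real_inner_smul_right, norm_smul, mul_pow,
        Real.norm_eq_abs, sq_abs, real_inner_comm]
      ring
    have hexpm : (μ * (1 + (t : ℝ))) ^ 2 / 4 * r (t + 1) ^ 2
        = (μ * (1 + (t : ℝ))) ^ 2 / 4 * r t ^ 2
          - μ * (1 + (t : ℝ)) * ⟪g t, θ t - θstar⟫ + ‖g t‖ ^ 2 := by
      rw [hnorm, hαt]
      field_simp
      ring
    have hexpt := congrArg (fun x => (t : ℝ) * x) hexpm
    have hip' : μ * (1 + (t : ℝ)) * (t : ℝ)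
          * (L (θ t) - L θstar + μ / 2 * r t ^ 2 - ε * D)
        ≤ μ * (1 + (t : ℝ)) * (t : ℝ) * ⟪g t, θ t - θstar⟫ :=
      mul_le_mul_of_nonneg_left (hipge t) (by positivity)
    have hgsq : ‖g t‖ ^ 2 ≤ σT ^ 2 := by
      have := hgnorm t
      nlinarith [norm_nonneg (g t)]
    have hgsqt : (t : ℝ) * ‖g t‖ ^ 2 ≤ (1 + (t : ℝ)) * σT ^ 2 := by
      nlinarith [mul_nonneg ht0 (sub_nonneg.mpr hgsq), sq_nonneg σT]
    have hmul : μ * (1 + (t : ℝ)) * ((t : ℝ) * (L (θ t) - L θstar))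
        ≤ μ * (1 + (t : ℝ))
          * (A t - A (t + 1) + σT ^ 2 / μ + (t : ℝ) * (ε * D)) := by
      have hA1 : A t = μ * (t : ℝ) * ((t : ℝ) - 1) / 4 * r t ^ 2 := by simp [hAdef]
      have hA2 : A (t + 1) = μ * ((t : ℝ) + 1) * (t : ℝ) / 4 * r (t + 1) ^ 2 := by
        simp only [hAdef]
        push_cast
        ring
      have hσμ : μ * (1 + (t : ℝ)) * (σT ^ 2 / μ) = (1 + (t : ℝ)) * σT ^ 2 := by
        field_simp
      rw [hA1, hA2]
      nlinarith [hexpt, hip', hgsqt, hσμ]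
    exact le_of_mul_le_mul_left hmul hμc
  -- telescoping and Gauss sums over Icc 1 n
  have htel : ∀ n : ℕ, ∑ t ∈ Icc 1 n, (A t - A (t + 1)) = A 1 - A (n + 1) := by
    intro n
    induction n with
    | zero => simp
    | succ k ih =>
        rw [Finset.sum_Icc_succ_top (by omega), ih]
        ring
  have hgauss : ∀ n : ℕ, ∑ t ∈ Icc 1 n, (t : ℝ) = (n : ℝ) * ((n : ℝ) + 1) / 2 := by
    intro n
    induction n with
    | zero => simp
    | succ k ih =>
        rw [Finset.sum_Icc_succ_top (by omega), ih]
        push_cast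
        ring
  have hA1 : A 1 = 0 := by simp [hAdef]
  have hAT : 0 ≤ A (T + 1) := by
    have h : A (T + 1) = μ * ((T : ℝ) + 1) * (T : ℝ) / 4 * r (T + 1) ^ 2 := by
      simp only [hAdef]
      push_cast
      ring
    rw [h]
    positivity
  set m : ℝ := (Finset.Icc 1 T).inf' (by simp [Finset.nonempty_Icc]; omega)
      (fun t => L (θ t) - L θstar) with hmdef
  have hmle : ∀ t ∈ Icc 1 T, m ≤ L (θ t) - L θstar := fun t ht => Finset.inf'_le _ ht
  have hsum1 : m * ((T : ℝ) * ((T : ℝ) + 1) / 2) ≤ ∑ t ∈ Icc 1 T, (t : ℝ) * (L (θ t) - L θstar) := by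
    rw [← hgauss T, Finset.mul_sum]
    refine Finset.sum_le_sum fun t ht => ?_
    rw [mul_comm]
    exact mul_le_mul_of_nonneg_left (hmle t ht) (Nat.cast_nonneg t)
  have hsum2 : ∑ t ∈ Icc 1 T, (t : ℝ) * (L (θ t) - L θstar)
      ≤ (A 1 - A (T + 1)) + (T : ℝ) * (σT ^ 2 / μ)
        + ((T : ℝ) * ((T : ℝ) + 1) / 2) * (ε * D) := by
    calc ∑ t ∈ Icc 1 T, (t : ℝ) * (L (θ t) - L θstar)
        ≤ ∑ t ∈ Icc 1 T, (A t - A (t + 1) + σT ^ 2 / μ + (t : ℝ) * (ε * D)) :=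
          Finset.sum_le_sum fun t _ => hstep t
      _ = (A 1 - A (T + 1)) + (T : ℝ) * (σT ^ 2 / μ)
          + ((T : ℝ) * ((T : ℝ) + 1) / 2) * (ε * D) := by
          rw [Finset.sum_add_distrib, Finset.sum_add_distrib, htel T, ← Finset.sum_mul,
            hgauss T, Finset.sum_const, Nat.card_Icc]
          simp only [nsmul_eq_mul]
          push_cast [Nat.add_sub_cancel]
          ring
  have hT1 : (1 : ℝ) ≤ (T : ℝ) := by exact_mod_cast hT
  have hS : (0 : ℝ) < (T : ℝ) * ((T : ℝ) + 1) / 2 := by nlinarith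
  have hkey : m * ((T : ℝ) * ((T : ℝ) + 1) / 2)
      ≤ (2 * σT ^ 2 / (μ * ((T : ℝ) + 1)) + D * ε) * ((T : ℝ) * ((T : ℝ) + 1) / 2) := by
    have heq : (T : ℝ) * (σT ^ 2 / μ)
        = (2 * σT ^ 2 / (μ * ((T : ℝ) + 1))) * ((T : ℝ) * ((T : ℝ) + 1) / 2) := by
      field_simp
    have := le_trans hsum1 hsum2
    rw [hA1] at this
    nlinarith [hAT]
  have := le_of_mul_le_mul_right hkey hS
  exact_mod_cast this
end

section
/- Let W be a finite index set with vectors u_i ∈ ℝ^d (i ∈ W), let u = Σ_{i∈W} u_i, and let X be a nonempty finite set with vectors v_j ∈ ℝ^d (j ∈ X). For each i ∈ W choose π(i) ∈ argmin_{j∈X} ‖u_i − v_j‖, and define weights w_j = |{i ∈ W : π(i) = j}| for j ∈ X. Then ‖Σ_{j∈X} w_j v_j − u‖ ≤ Σ_{i∈W} min_{j∈X} ‖u_i − v_j‖; consequently, min over all real weight vectors w of ‖Σ_{j∈X} w_j v_j − u‖ is at most Ê(X) := Σ_{i∈W} min_{j∈X} ‖u_i − v_j‖. -/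
open Finset

/-- Medoid (CRAIG) upper bound on the gradient-matching error: assigning each
`i ∈ W` to its nearest `v`-vector in `X` and weighing each `j ∈ X` by the size of
its preimage gives `‖Σ_{j∈X} w_j v_j - u‖ ≤ Σ_{i∈W} min_{j∈X} ‖u_i - v_j‖`; in
particular the optimal gradient-matching error is at most `Ê(X)`. -/
theorem craig_medoid_upper_bound
    {d : ℕ} {ιW ιX : Type*} [DecidableEq ιX]
    (W : Finset ιW) (ui : ιW → EuclideanSpace ℝ (Fin d))
    (u : EuclideanSpace ℝ (Fin d)) (hu : u = ∑ i ∈ W, ui i)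
    (X : Finset ιX) (hX : X.Nonempty)
    (v : ιX → EuclideanSpace ℝ (Fin d))
    (π : ιW → ιX)
    (hπ : ∀ i ∈ W, π i ∈ X ∧ ∀ j ∈ X, ‖ui i - v (π i)‖ ≤ ‖ui i - v j‖)
    (w : ιX → ℝ)
    (hw : ∀ j : ιX, w j = ((W.filter fun i => π i = j).card : ℝ)) :
    ‖(∑ j ∈ X, w j • v j) - u‖ ≤ ∑ i ∈ W, X.inf' hX (fun j => ‖ui i - v j‖) ∧
    sInf {r : ℝ | ∃ w' : ιX → ℝ, r = ‖(∑ j ∈ X, w' j • v j) - u‖}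
      ≤ ∑ i ∈ W, X.inf' hX (fun j => ‖ui i - v j‖) := by
  have hmaps : ∀ i ∈ W, π i ∈ X := fun i hi => (hπ i hi).1
  have hsum : (∑ j ∈ X, w j • v j) = ∑ i ∈ W, v (π i) := by
    rw [← Finset.sum_fiberwise_of_maps_to hmaps (fun i => v (π i))]
    refine Finset.sum_congr rfl fun j hj => ?_
    rw [Finset.sum_congr rfl (fun i hi => by
      rw [(Finset.mem_filter.mp hi).2]), Finset.sum_const, hw,
      ← Nat.cast_smul_eq_nsmul ℝ]
  have h1 : ‖(∑ j ∈ X, w j • v j) - u‖ ≤ ∑ i ∈ W, X.inf' hX (fun j => ‖ui i - v j‖) := by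
    rw [hsum, hu, ← Finset.sum_sub_distrib]
    refine (norm_sum_le _ _).trans (Finset.sum_le_sum fun i hi => ?_)
    rw [norm_sub_rev]
    exact Finset.le_inf' hX _ fun j hj => (hπ i hi).2 j hj
  refine ⟨h1, le_trans (csInf_le ⟨0, fun r hr => ?_⟩ ⟨w, rfl⟩) h1⟩
  obtain ⟨w', rfl⟩ := hr
  exact norm_nonneg _
end

section
/- (CRAIG convergence, strongly convex case.) Suppose at every iteration t the subset X^t and weights w^t satisfy ‖Σ_{i∈X^t} w^t_i ∇L_T^i(θ_t) − ∇L(θ_t)‖ ≤ ε (which holds in particular when the CRAIG upper bound Ê(X^t) = Σ_{i∈W} min_{j∈X^t} ‖∇L^i(θ_t) − ∇L_T^j(θ_t)‖ is at most ε). Assume ‖Σ_{i∈X^t} w^t_i ∇L_T^i(θ_t)‖ ≤ σ_T for all t, assume L is μ-strongly convex, and use the learning rate schedule α_t = 2/(μ(1+t)). Then min_{1 ≤ t ≤ T} (L(θ_t) − L(θ*)) ≤ 2 σ_T²/(μ(T+1)) + D ε. -/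
open Finset
open scoped RealInnerProductSpace

private lemma craig_sum_Icc_cast (T : ℕ) :
    ∑ t ∈ Finset.Icc 1 T, (t : ℝ) = T * (T + 1) / 2 := by
  induction T with
  | zero => simp
  | succ n ih =>
    rw [Finset.sum_Icc_succ_top (by omega : 1 ≤ n + 1), ih]
    push_cast; ring

private lemma craig_sum_Icc_telescope (F : ℕ → ℝ) (T : ℕ) :
    ∑ t ∈ Finset.Icc 1 T, (F t - F (t + 1)) = F 1 - F (T + 1) := by
  induction T with
  | zero => simp
  | succ n ih =>
    rw [Finset.sum_Icc_succ_top (by omega : 1 ≤ n + 1), ih]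
    ring

private lemma craig_step {E : Type*} [NormedAddCommGroup E] [InnerProductSpace ℝ E]
    (μ ε D σT t lt ls : ℝ) (θt θt1 θs g gl : E)
    (hμ : 0 < μ) (hε : 0 < ε) (ht1 : 1 ≤ t)
    (hθ : θt1 = θt - (2 / (μ * (1 + t))) • g)
    (hsc : lt + ⟪gl, θs - θt⟫ + μ / 2 * ‖θs - θt‖ ^ 2 ≤ ls)
    (hEb : ‖g - gl‖ ≤ ε) (hDb : ‖θt - θs‖ ≤ D) (hσb : ‖g‖ ≤ σT) :
    t * (lt - ls) ≤ μ * t * (t - 1) / 4 * ‖θt - θs‖ ^ 2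
      - μ * (t + 1) * t / 4 * ‖θt1 - θs‖ ^ 2 + σT ^ 2 / μ + t * (D * ε) := by
  have ht0 : (0 : ℝ) ≤ t := by linarith
  have hσ0 : 0 ≤ σT := le_trans (norm_nonneg g) hσb
  have hc : (0 : ℝ) < μ * (1 + t) := by positivity
  have hc' : μ * (1 + t) ≠ 0 := ne_of_gt hc
  set a : ℝ := 2 / (μ * (1 + t)) with hadef
  have hapos : 0 < a := by rw [hadef]; positivity
  set x : E := θt - θs with hxdef
  have hupd' : θt1 - θs = x - a • g := by rw [hθ, hxdef]; abel
  have hsmul : ‖a • g‖ ^ 2 = a ^ 2 * ‖g‖ ^ 2 := by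
    rw [norm_smul, mul_pow, Real.norm_eq_abs, sq_abs]
  have hexp : ‖θt1 - θs‖ ^ 2 = ‖x‖ ^ 2 - 2 * (a * ⟪x, g⟫) + a ^ 2 * ‖g‖ ^ 2 := by
    rw [hupd', norm_sub_sq_real, real_inner_smul_right, hsmul]
  have hI : ⟪x, g⟫ = μ * (1 + t) / 4 * (‖x‖ ^ 2 - ‖θt1 - θs‖ ^ 2)
      + ‖g‖ ^ 2 / (μ * (1 + t)) := by
    have h2 : ⟪x, g⟫ = (‖x‖ ^ 2 - ‖θt1 - θs‖ ^ 2 + a ^ 2 * ‖g‖ ^ 2) / (2 * a) := by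
      rw [eq_div_iff (by positivity : (2 : ℝ) * a ≠ 0)]
      linarith [hexp]
    rw [h2, hadef]
    field_simp
    ring
  -- strong convexity rearranged
  have hsc' : lt - ls ≤ ⟪gl, x⟫ - μ / 2 * ‖x‖ ^ 2 := by
    have h1 : θs - θt = -x := by rw [hxdef]; abel
    rw [h1, inner_neg_right, norm_neg] at hsc
    linarith
  -- gradient gap bound
  have hD0 : 0 ≤ D := le_trans (norm_nonneg _) hDb
  have hgap : ⟪gl, x⟫ ≤ ⟪x, g⟫ + ε * D := by
    have h1 : ⟪gl - g, x⟫ ≤ ‖gl - g‖ * ‖x‖ := real_inner_le_norm _ _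
    have h2 : ‖gl - g‖ ≤ ε := by rw [← norm_neg]; simpa [neg_sub] using hEb
    have h3 : ‖gl - g‖ * ‖x‖ ≤ ε * D :=
      mul_le_mul h2 hDb (norm_nonneg _) (le_of_lt hε)
    have h4 : ⟪gl - g, x⟫ = ⟪gl, x⟫ - ⟪g, x⟫ := inner_sub_left _ _ _
    have h5 : ⟪g, x⟫ = ⟪x, g⟫ := real_inner_comm _ _
    linarith [le_trans h1 h3]
  have hG : ‖g‖ ^ 2 ≤ σT ^ 2 := pow_le_pow_left₀ (norm_nonneg g) hσb 2
  have htG : t * (‖g‖ ^ 2 / (μ * (1 + t))) ≤ σT ^ 2 / μ := by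
    rw [mul_div_assoc', div_le_div_iff₀ hc hμ]
    have h1 : 0 ≤ μ * (σT ^ 2 + t * (σT ^ 2 - ‖g‖ ^ 2)) :=
      mul_nonneg hμ.le
        (by linarith [mul_nonneg ht0 (sub_nonneg.mpr hG), sq_nonneg σT])
    nlinarith [h1]
  have h1 : lt - ls
      ≤ μ * (1 + t) / 4 * (‖x‖ ^ 2 - ‖θt1 - θs‖ ^ 2)
        + ‖g‖ ^ 2 / (μ * (1 + t)) + ε * D - μ / 2 * ‖x‖ ^ 2 := by
    linarith [hsc', hgap, hI]
  have h2 := mul_le_mul_of_nonneg_left h1 ht0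
  have heq : t * (μ * (1 + t) / 4 * (‖x‖ ^ 2 - ‖θt1 - θs‖ ^ 2)
        + ‖g‖ ^ 2 / (μ * (1 + t)) + ε * D - μ / 2 * ‖x‖ ^ 2)
      = (μ * t * (t - 1) / 4 * ‖x‖ ^ 2 - μ * (t + 1) * t / 4 * ‖θt1 - θs‖ ^ 2)
        + t * (‖g‖ ^ 2 / (μ * (1 + t))) + t * (D * ε) := by
    field_simp
    ring
  linarith [h2, htG, heq.le, heq.ge]

/-- CRAIG convergence, strongly convex case: if at every iteration the gradient-matching
error of the selected weighted subset is at most `ε`, then gradient descent with step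
sizes `2/(μ(1+t))` converges at rate `O(1/T)` up to an additive `D ε` term. -/
theorem craig_convergence_strongly_convex
    {d : ℕ} {ι : Type*}
    (L : EuclideanSpace ℝ (Fin d) → ℝ)
    (gL : EuclideanSpace ℝ (Fin d) → EuclideanSpace ℝ (Fin d))
    (hL : ∀ θ, HasGradientAt L (gL θ) θ)
    (μ : ℝ) (hμ : 0 < μ)
    (hstrong : ∀ x y : EuclideanSpace ℝ (Fin d),
        L x + ⟪gL x, y - x⟫ + (μ / 2) * ‖y - x‖ ^ 2 ≤ L y)
    (θstar : EuclideanSpace ℝ (Fin d))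
    (hmin : ∀ θ, L θstar ≤ L θ)
    (LT : ι → EuclideanSpace ℝ (Fin d) → ℝ)
    (gLT : ι → EuclideanSpace ℝ (Fin d) → EuclideanSpace ℝ (Fin d))
    (hLT : ∀ i θ, HasGradientAt (LT i) (gLT i θ) θ)
    (X : ℕ → Finset ι) (w : ℕ → ι → ℝ)
    (hw0 : ∀ t, ∀ i ∈ X t, 0 ≤ w t i)
    (ε : ℝ) (hε : 0 < ε)
    (θ : ℕ → EuclideanSpace ℝ (Fin d))
    (hE : ∀ t, ‖(∑ i ∈ X t, w t i • gLT i (θ t)) - gL (θ t)‖ ≤ ε)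
    (D σT : ℝ) (T : ℕ) (hT : 1 ≤ T)
    (hD : ∀ t, ‖θ t - θstar‖ ≤ D)
    (hσ : ∀ t, ‖∑ i ∈ X t, w t i • gLT i (θ t)‖ ≤ σT)
    (α : ℕ → ℝ) (hα : ∀ t, α t = 2 / (μ * (1 + t)))
    (hupd : ∀ t, θ (t + 1) = θ t - α t • ∑ i ∈ X t, w t i • gLT i (θ t)) :
    (Finset.Icc 1 T).inf' (by simp [Finset.nonempty_Icc]; omega)
        (fun t => L (θ t) - L θstar)
      ≤ 2 * σT ^ 2 / (μ * (T + 1)) + D * ε := by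
  set F : ℕ → ℝ := fun t => μ * t * ((t : ℝ) - 1) / 4 * ‖θ t - θstar‖ ^ 2 with hFdef
  have step : ∀ t : ℕ, 1 ≤ t →
      (t : ℝ) * (L (θ t) - L θstar)
        ≤ F t - F (t + 1) + σT ^ 2 / μ + (t : ℝ) * (D * ε) := by
    intro t ht
    have ht1 : (1 : ℝ) ≤ (t : ℝ) := by exact_mod_cast ht
    have h := craig_step μ ε D σT (t : ℝ) (L (θ t)) (L θstar)
      (θ t) (θ (t + 1)) θstar (∑ i ∈ X t, w t i • gLT i (θ t)) (gL (θ t))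
      hμ hε ht1 (by rw [hupd t, hα t]) (hstrong (θ t) θstar) (hE t) (hD t) (hσ t)
    have hFt : F t = μ * (t : ℝ) * ((t : ℝ) - 1) / 4 * ‖θ t - θstar‖ ^ 2 := by
      simp only [hFdef]
    have hFt1 : F (t + 1)
        = μ * ((t : ℝ) + 1) * (t : ℝ) / 4 * ‖θ (t + 1) - θstar‖ ^ 2 := by
      simp only [hFdef]; push_cast; ring
    rw [hFt, hFt1]
    linarith [h]
  have hne : (Finset.Icc 1 T).Nonempty := by
    rw [Finset.nonempty_Icc]; omega
  set m := (Finset.Icc 1 T).inf' hne (fun t => L (θ t) - L θstar) with hmdef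
  have hmle : ∀ t ∈ Finset.Icc 1 T, m ≤ L (θ t) - L θstar :=
    fun t ht => Finset.inf'_le _ ht
  have hsum1 : ∑ t ∈ Finset.Icc 1 T, (t : ℝ) * m
      ≤ ∑ t ∈ Finset.Icc 1 T, (t : ℝ) * (L (θ t) - L θstar) :=
    Finset.sum_le_sum fun t ht => mul_le_mul_of_nonneg_left (hmle t ht) (Nat.cast_nonneg t)
  have hsum2 : ∑ t ∈ Finset.Icc 1 T, (t : ℝ) * (L (θ t) - L θstar)
      ≤ ∑ t ∈ Finset.Icc 1 T, (F t - F (t + 1) + σT ^ 2 / μ + (t : ℝ) * (D * ε)) :=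
    Finset.sum_le_sum fun t ht => step t (Finset.mem_Icc.mp ht).1
  have hcard : (Finset.Icc 1 T).card = T := by
    rw [Nat.card_Icc]; omega
  have hsum3 : ∑ t ∈ Finset.Icc 1 T, (F t - F (t + 1) + σT ^ 2 / μ + (t : ℝ) * (D * ε))
      = (F 1 - F (T + 1)) + (T : ℝ) * (σT ^ 2 / μ)
        + ((T : ℝ) * ((T : ℝ) + 1) / 2) * (D * ε) := by
    rw [Finset.sum_add_distrib, Finset.sum_add_distrib, craig_sum_Icc_telescope,
      Finset.sum_const, hcard, nsmul_eq_mul, ← Finset.sum_mul, craig_sum_Icc_cast]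
  have hF1 : F 1 = 0 := by
    simp only [hFdef]; norm_num
  have hFT : 0 ≤ F (T + 1) := by
    simp only [hFdef]; push_cast
    rw [add_sub_cancel_right]
    positivity
  have hsumid : ∑ t ∈ Finset.Icc 1 T, (t : ℝ) * m
      = ((T : ℝ) * ((T : ℝ) + 1) / 2) * m := by
    rw [← Finset.sum_mul, craig_sum_Icc_cast]
  set S : ℝ := (T : ℝ) * ((T : ℝ) + 1) / 2 with hSdef
  have hkey : S * m ≤ (T : ℝ) * (σT ^ 2 / μ) + S * (D * ε) := by
    rw [hsumid] at hsum1
    rw [hsum3] at hsum2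
    linarith
  have hT1 : (1 : ℝ) ≤ (T : ℝ) := by exact_mod_cast hT
  have hSpos : 0 < S := by
    rw [hSdef]
    exact div_pos (mul_pos (by linarith) (by linarith)) two_pos
  have hT1ne : ((T : ℝ) + 1) ≠ 0 := ne_of_gt (by positivity)
  have heq2 : (2 * σT ^ 2 / (μ * ((T : ℝ) + 1)) + D * ε) * S
      = (T : ℝ) * (σT ^ 2 / μ) + S * (D * ε) := by
    rw [hSdef]
    field_simp
  have hfin : m * S ≤ (2 * σT ^ 2 / (μ * ((T : ℝ) + 1)) + D * ε) * S := by
    rw [heq2]; linarith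
  exact le_of_mul_le_mul_right hfin hSpos
end
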